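/- arXiv:1807.07707 — 9 statements merged into one kernel-verified Lean document; each statement's English description precedes it below -/
import Mathlib

section
/- For all real constants a > 0 and b > 0, ∫_0^∞ e^{-bx} log₂(1 + ax) dx = (1/b) · C₁(a/b). -/
/-!
Integrating by parts against `e^{-cu}` gives
`∫_1^∞ e^{-cu} log u du = c⁻¹ ∫_1^∞ u⁻¹ e^{-cu} du`; both boundary terms vanish, because
`log 1 = 0` and `e^{-cu} log u → 0`. With `c = b/a` one has `-bx = c - c(1 + ax)`, so the
substitution `u = 1 + ax` turns the left-hand side into `e^c / (a ln 2) · ∫_1^∞ e^{-cu} log u du`,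
which is `(1/b) C₁(a/b)`.
-/

open Real MeasureTheory Set

/-- `C₁(x) = (1/ln 2) · e^{1/x} · ∫_1^∞ t⁻¹ e^{-t/x} dt`. -/
noncomputable def C1 (x : ℝ) : ℝ :=
  (1 / Real.log 2) * Real.exp (1 / x) * ∫ t in Set.Ioi (1:ℝ), t⁻¹ * Real.exp (-t / x)

open Filter Topology Asymptotics

section ChangeOfVariables

variable {E : Type*} [NormedAddCommGroup E] [NormedSpace ℝ E]

theorem integral_comp_add_left_Ioi (g : ℝ → E) (s c : ℝ) :
    ∫ x in Ioi s, g (c + x) = ∫ x in Ioi (c + s), g x := by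
  have h := (measurePreserving_add_left volume c).setIntegral_preimage_emb
    (measurableEmbedding_addLeft c) g (Ioi (c + s))
  rwa [preimage_const_add_Ioi, add_sub_cancel_left] at h

theorem integral_comp_add_mul_Ioi (g : ℝ → E) (s c : ℝ) {a : ℝ} (ha : 0 < a) :
    ∫ x in Ioi s, g (c + a * x) = a⁻¹ • ∫ u in Ioi (c + a * s), g u := by
  rw [integral_comp_mul_left_Ioi (fun y => g (c + y)) s ha, integral_comp_add_left_Ioi]

end ChangeOfVariables

theorem tendsto_exp_neg_mul_mul_log_atTop {c : ℝ} (hc : 0 < c) :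
    Tendsto (fun u => exp (-c * u) * log u) atTop (𝓝 0) := by
  have hlin : Tendsto (fun u : ℝ => u * exp (-c * u)) atTop (𝓝 0) := by
    simpa using tendsto_rpow_mul_exp_neg_mul_atTop_nhds_zero 1 c hc
  refine squeeze_zero' ?_ ?_ hlin
  · filter_upwards [eventually_ge_atTop 1] with u hu
    exact mul_nonneg (exp_pos _).le (log_nonneg hu)
  · filter_upwards [eventually_gt_atTop 0] with u hu
    rw [mul_comm]
    exact mul_le_mul_of_nonneg_right ((log_le_sub_one_of_pos hu).trans (by linarith))
      (exp_pos _).le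

theorem integrableOn_exp_neg_mul_mul_log_Ioi_one {c : ℝ} (hc : 0 < c) :
    IntegrableOn (fun u => exp (-c * u) * log u) (Ioi 1) := by
  refine integrable_of_isBigO_exp_neg (half_pos hc) ?_ ?_
  · exact (continuous_exp.comp (continuous_const_mul _)).continuousOn.mul
      (continuousOn_log.mono fun u hu => ne_of_gt (zero_lt_one.trans_le hu))
  · have hbdd := (tendsto_exp_neg_mul_mul_log_atTop (half_pos hc)).isBigO_one ℝ
    refine (hbdd.mul (isBigO_refl (fun u => exp (-(c / 2) * u)) atTop)).congr
      (fun u => ?_) (fun u => one_mul _)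
    rw [mul_right_comm, ← exp_add]
    ring_nf

theorem integrableOn_inv_mul_exp_neg_mul_Ioi_one {c : ℝ} (hc : 0 < c) :
    IntegrableOn (fun u => u⁻¹ * exp (-c * u)) (Ioi 1) := by
  refine (exp_neg_integrableOn_Ioi 1 hc).mono' ?_ ?_
  · exact (measurable_inv.mul (measurable_exp.comp (measurable_const_mul _)))
      |>.aestronglyMeasurable
  · filter_upwards [ae_restrict_mem measurableSet_Ioi] with u (hu : 1 < u)
    rw [norm_mul, norm_of_nonneg (exp_pos _).le, norm_inv, norm_of_nonneg (by linarith)]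
    exact mul_le_of_le_one_left (exp_pos _).le (inv_le_one_of_one_le₀ hu.le)

theorem integral_exp_neg_mul_mul_log_Ioi_one {c : ℝ} (hc : 0 < c) :
    ∫ u in Ioi 1, exp (-c * u) * log u = c⁻¹ * ∫ u in Ioi 1, u⁻¹ * exp (-c * u) := by
  have hexp (u : ℝ) : HasDerivAt (fun u => -c⁻¹ * exp (-c * u)) (exp (-c * u)) u :=
    ((((hasDerivAt_id' u).const_mul (-c)).exp).const_mul (-c⁻¹)).congr_deriv (by field_simp)
  have hlog (u : ℝ) (hu : u ∈ Ioi 1) : HasDerivAt log u⁻¹ u :=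
    hasDerivAt_log (zero_lt_one.trans hu).ne'
  have hint : IntegrableOn (fun u => -c⁻¹ * (u⁻¹ * exp (-c * u))) (Ioi 1) :=
    (integrableOn_inv_mul_exp_neg_mul_Ioi_one hc).const_mul _
  have hboundary : Tendsto (log * fun u => -c⁻¹ * exp (-c * u)) (𝓝[>] 1) (𝓝 0) := by
    have hcont : ContinuousAt (log * fun u => -c⁻¹ * exp (-c * u)) 1 := by
      fun_prop (disch := norm_num)
    simpa using hcont.tendsto.mono_left nhdsWithin_le_nhds
  have hinfty : Tendsto (log * fun u => -c⁻¹ * exp (-c * u)) atTop (𝓝 0) := by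
    simpa [Pi.mul_def, mul_comm (log _), mul_assoc] using
      (tendsto_exp_neg_mul_mul_log_atTop hc).const_mul (-c⁻¹)
  have hibp := integral_Ioi_mul_deriv_eq_deriv_mul hlog (fun u _ => hexp u)
    (by simpa only [Pi.mul_def, mul_comm (log _)] using
      integrableOn_exp_neg_mul_mul_log_Ioi_one hc)
    (by simpa only [Pi.mul_def, mul_left_comm (_⁻¹)] using hint) hboundary hinfty
  simp only [mul_left_comm (_⁻¹), integral_const_mul, mul_comm (log _)] at hibp
  rw [hibp]
  ring

theorem stmt1 (a b : ℝ) (ha : 0 < a) (hb : 0 < b) :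
    ∫ x in Set.Ioi (0:ℝ), Real.exp (-b * x) * Real.logb 2 (1 + a * x)
      = (1 / b) * C1 (a / b) := by
  have hc : 0 < b / a := div_pos hb ha
  have hC1 : C1 (a / b) = 1 / log 2 * exp (b / a) * ∫ t in Ioi 1, t⁻¹ * exp (-(b / a) * t) := by
    simp only [C1, one_div_div]
    congr 2 with t
    field_simp
  calc ∫ x in Ioi 0, exp (-b * x) * logb 2 (1 + a * x)
      = ∫ x in Ioi 0, exp (b / a) / log 2 * (exp (-(b / a) * (1 + a * x)) * log (1 + a * x)) := by
        congr 1 with x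
        rw [logb, show -b * x = b / a + -(b / a) * (1 + a * x) by field_simp; ring, exp_add]
        ring
    _ = a⁻¹ * ∫ u in Ioi 1, exp (b / a) / log 2 * (exp (-(b / a) * u) * log u) := by
        simpa only [mul_zero, add_zero, smul_eq_mul] using integral_comp_add_mul_Ioi
          (fun u => exp (b / a) / log 2 * (exp (-(b / a) * u) * log u)) 0 1 ha
    _ = (1 / b) * C1 (a / b) := by
        rw [integral_const_mul, integral_exp_neg_mul_mul_log_Ioi_one hc, hC1]
        field_simp
end

section
/- The function C₁ is strictly increasing on (0,∞): for all real x, y with 0 < x < y, one has C₁(x) < C₁(y). -/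
/-! Absorbing `e^{1/x}` into the integral gives `C₁(x) = (1/ln 2) ∫_1^∞ t⁻¹ e^{(1-t)/x} dt`.
Since `1 - t < 0` on the domain of integration, the integrand is strictly increasing in `x`,
hence so is its integral. -/

open Real MeasureTheory Set

theorem setIntegral_lt_setIntegral_of_forall_lt {X : Type*} [MeasurableSpace X] {μ : Measure X}
    {s : Set X} {f g : X → ℝ} (hs : MeasurableSet s) (hμs : μ s ≠ 0)
    (hf : IntegrableOn f s μ) (hg : IntegrableOn g s μ) (hlt : ∀ x ∈ s, f x < g x) :
    ∫ x in s, f x ∂μ < ∫ x in s, g x ∂μ := by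
  have hpos : ∀ x ∈ s, 0 < g x - f x := fun x hx => sub_pos.2 (hlt x hx)
  have hsupp : s ⊆ Function.support fun x => g x - f x := fun x hx => (hpos x hx).ne'
  have hnonneg : 0 ≤ᵐ[μ.restrict s] fun x => g x - f x :=
    ae_restrict_of_forall_mem hs fun x hx => (hpos x hx).le
  rw [← sub_pos, ← integral_sub hg hf, setIntegral_pos_iff_support_of_nonneg_ae hnonneg (hg.sub hf),
    inter_eq_self_of_subset_right hsupp]
  exact pos_iff_ne_zero.2 hμs

lemma integrableOn_inv_mul_exp_one_sub_div {x : ℝ} (hx : 0 < x) :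
    IntegrableOn (fun t : ℝ => t⁻¹ * exp ((1 - t) / x)) (Ioi 1) := by
  have hexp : IntegrableOn (fun t : ℝ => exp ((1 - t) / x)) (Ioi 1) := by
    have hdecay := integrableOn_exp_mul_Ioi (neg_lt_zero.2 (inv_pos.2 hx)) 1
    refine IntegrableOn.congr_fun (hdecay.const_mul (exp x⁻¹)) (fun t _ => ?_) measurableSet_Ioi
    rw [← exp_add]
    ring_nf
  refine hexp.bdd_mul (c := 1) (by fun_prop) (ae_restrict_of_forall_mem measurableSet_Ioi ?_)
  intro t (ht : 1 < t)
  rw [norm_inv, Real.norm_of_nonneg (by linarith)]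
  exact inv_le_one_of_one_le₀ ht.le

lemma C1_eq_integral_exp_one_sub_div (x : ℝ) :
    C1 x = 1 / log 2 * ∫ t in Ioi 1, t⁻¹ * exp ((1 - t) / x) := by
  rw [C1, mul_assoc, ← integral_const_mul]
  congr 2 with t
  rw [mul_left_comm, ← exp_add, sub_eq_add_neg, add_div]

lemma exp_one_sub_div_lt_exp_one_sub_div {t x y : ℝ} (ht : 1 < t) (hx : 0 < x) (hxy : x < y) :
    exp ((1 - t) / x) < exp ((1 - t) / y) :=
  exp_lt_exp.2 (mul_lt_mul_of_neg_left (inv_strictAnti₀ hx hxy) (by linarith))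

theorem stmt2 : ∀ x y : ℝ, 0 < x → x < y → C1 x < C1 y := by
  intro x y hx hxy
  rw [C1_eq_integral_exp_one_sub_div, C1_eq_integral_exp_one_sub_div]
  refine mul_lt_mul_of_pos_left ?_ (by positivity)
  refine setIntegral_lt_setIntegral_of_forall_lt measurableSet_Ioi (by simp)
    (integrableOn_inv_mul_exp_one_sub_div hx) (integrableOn_inv_mul_exp_one_sub_div (hx.trans hxy))
    fun t (ht : 1 < t) => ?_
  exact mul_lt_mul_of_pos_left (exp_one_sub_div_lt_exp_one_sub_div ht hx hxy) (by positivity)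
end

section
/- Let L₁, L₂, σ² > 0 and γ₁, γ₂ ∈ (0,1) with γ₁ + γ₂ = 1. Then ∫_0^∞ ∫_0^∞ (1/4) e^{-x₁/2} e^{-x₂/2} [ max{ log₂(1 + γ₁L₁x₁/(γ₂L₁x₁ + 2σ²)), log₂(1 + γ₁L₂x₂/(γ₂L₂x₂ + 2σ²)) } + log₂(1 + γ₂L₂x₂/(2σ²)) ] dx₁ dx₂ = C₁(L₁/σ²) − C₁(γ₂L₁/σ²) + C₁(L₂/σ²) − C₁(L₁L₂/((L₁+L₂)σ²)) + C₁(γ₂L₁L₂/((L₁+L₂)σ²)). (This is the closed-form ergodic sum capacity of two-user bi-directional cooperative NOMA under the nearby-users approximation.) -/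
open Real MeasureTheory Set

open Filter Topology

/-!
Let `R u = log₂ (1 + γ₁ u / (γ₂ u + 2σ²)) = log₂ (1 + u / (2σ²)) - log₂ (1 + γ₂ u / (2σ²))`.
Since `R` is increasing, `max (R u₁) (R u₂) = R u₁ + R u₂ - R (min u₁ u₂)`, so the integrand is
`R (L₁ x₁) + log₂ (1 + L₂ x₂ / (2σ²)) - R (min (L₁ x₁) (L₂ x₂))` times the density of `(X₁, X₂)`.
Now `Lᵢ Xᵢ` is exponential with rate `1 / (2 Lᵢ)`, and the minimum of independent exponential
variables is exponential with the sum of the rates. Everything is thereby reduced to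
`E log₂ (1 + c Y)` for `Y` exponential with rate `a`, which an integration by parts and the
substitution `t = 1 + c y` turn into `C1 (c / a)`.
-/

section LogLaplace

variable {a c : ℝ}

lemma integral_Ioi_mul_exp_neg_mul (ha : 0 < a) (b : ℝ) :
    ∫ x in Ioi b, a * exp (-(a * x)) = exp (-(a * b)) := by
  rw [integral_const_mul, integral_comp_mul_left_Ioi (fun y => exp (-y)) b ha,
    integral_exp_neg_Ioi, smul_eq_mul, mul_inv_cancel_left₀ ha.ne']

lemma integral_comp_one_add_mul_Ioi (g : ℝ → ℝ) (hc : 0 < c) :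
    ∫ x in Ioi 0, g (1 + c * x) = c⁻¹ * ∫ t in Ioi 1, g t := by
  have hshift : ∫ u in Ioi 0, g (1 + u) = ∫ t in Ioi 1, g t := by
    have := (measurePreserving_add_left volume (1 : ℝ)).setIntegral_preimage_emb
      (measurableEmbedding_addLeft 1) g (Ioi 1)
    simpa using this
  rw [integral_comp_mul_left_Ioi (fun u => g (1 + u)) 0 hc, mul_zero, hshift, smul_eq_mul]

lemma exp_neg_mul_mul_log_one_add_mem_Icc (hc : 0 ≤ c) {x : ℝ} (hx : 0 ≤ x) :
    exp (-(a * x)) * log (1 + c * x) ∈ Icc 0 (c * (x * exp (-(a * x)))) := by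
  have hcx : 0 ≤ c * x := mul_nonneg hc hx
  have hlog : log (1 + c * x) ≤ c * x := by
    linarith [log_le_sub_one_of_pos (by linarith : 0 < 1 + c * x)]
  refine ⟨mul_nonneg (exp_pos _).le (log_nonneg (by linarith)), ?_⟩
  calc exp (-(a * x)) * log (1 + c * x) ≤ exp (-(a * x)) * (c * x) := by gcongr
    _ = c * (x * exp (-(a * x))) := by ring

lemma integrableOn_exp_neg_mul_mul_log_one_add (ha : 0 < a) (hc : 0 ≤ c) :
    IntegrableOn (fun x => exp (-(a * x)) * log (1 + c * x)) (Ioi 0) := by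
  have hdom : IntegrableOn (fun x : ℝ => c * (x * exp (-(a * x)))) (Ioi 0) := by
    have h : IntegrableOn (fun x : ℝ => x * exp (-(a * x))) (Ioi 0) := by
      simpa using integrableOn_rpow_mul_exp_neg_mul_rpow (s := 1) (p := 1) (by norm_num) one_pos ha
    exact h.const_mul c
  refine hdom.mono' (by fun_prop) ?_
  filter_upwards [ae_restrict_mem measurableSet_Ioi] with x (hx : 0 < x)
  have h := exp_neg_mul_mul_log_one_add_mem_Icc (a := a) hc hx.le
  rw [norm_of_nonneg h.1]
  exact h.2

lemma integrableOn_exp_neg_mul_mul_logb_one_add (ha : 0 < a) (hc : 0 ≤ c) :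
    IntegrableOn (fun x => exp (-(a * x)) * logb 2 (1 + c * x)) (Ioi 0) := by
  simpa only [IntegrableOn, logb, mul_div_assoc] using
    (integrableOn_exp_neg_mul_mul_log_one_add ha hc).div_const (log 2)

lemma tendsto_exp_neg_mul_mul_log_one_add (ha : 0 < a) (hc : 0 ≤ c) :
    Tendsto (fun x => exp (-(a * x)) * log (1 + c * x)) atTop (𝓝 0) := by
  have hdom : Tendsto (fun x : ℝ => c * (x * exp (-(a * x)))) atTop (𝓝 0) := by
    simpa [rpow_one] using (tendsto_rpow_mul_exp_neg_mul_atTop_nhds_zero 1 a ha).const_mul c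
  refine squeeze_zero' ?_ ?_ hdom
  · filter_upwards [eventually_ge_atTop 0] with x hx
    exact (exp_neg_mul_mul_log_one_add_mem_Icc hc hx).1
  · filter_upwards [eventually_ge_atTop 0] with x hx
    exact (exp_neg_mul_mul_log_one_add_mem_Icc hc hx).2

lemma integrableOn_exp_neg_mul_mul_div_one_add (ha : 0 < a) (hc : 0 ≤ c) :
    IntegrableOn (fun x => exp (-(a * x)) * (c / (1 + c * x))) (Ioi 0) := by
  refine ((exp_neg_integrableOn_Ioi 0 ha).mul_const c).mono' (by fun_prop) ?_
  filter_upwards [ae_restrict_mem measurableSet_Ioi] with x (hx : 0 < x)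
  have hden : 1 ≤ 1 + c * x := by nlinarith
  rw [norm_of_nonneg (by positivity), neg_mul]
  gcongr
  exact div_le_self hc hden

lemma integral_mul_exp_neg_mul_mul_log_one_add (ha : 0 < a) (hc : 0 ≤ c) :
    ∫ x in Ioi 0, a * exp (-(a * x)) * log (1 + c * x)
      = ∫ x in Ioi 0, exp (-(a * x)) * (c / (1 + c * x)) := by
  have hderiv : ∀ x ∈ Ici (0 : ℝ), HasDerivAt (fun x => exp (-(a * x)) * log (1 + c * x))
      (exp (-(a * x)) * (c / (1 + c * x)) - a * exp (-(a * x)) * log (1 + c * x)) x := by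
    intro x (hx : 0 ≤ x)
    have hlog : HasDerivAt (fun x => log (1 + c * x)) (c / (1 + c * x)) x := by
      simpa using (((hasDerivAt_id' x).const_mul c).const_add 1).log (by positivity)
    have hexp : HasDerivAt (fun x => exp (-(a * x))) (exp (-(a * x)) * -a) x := by
      simpa using ((hasDerivAt_id' x).const_mul a).neg.exp
    exact (hexp.mul hlog).congr_deriv (by ring)
  have hint : IntegrableOn (fun x => a * exp (-(a * x)) * log (1 + c * x)) (Ioi 0) := by
    simpa only [IntegrableOn, mul_assoc] using
      (integrableOn_exp_neg_mul_mul_log_one_add ha hc).const_mul a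
  have hparts := integral_Ioi_of_hasDerivAt_of_tendsto' hderiv
    ((integrableOn_exp_neg_mul_mul_div_one_add ha hc).sub hint)
    (tendsto_exp_neg_mul_mul_log_one_add ha hc)
  rw [integral_sub (integrableOn_exp_neg_mul_mul_div_one_add ha hc) hint] at hparts
  simp only [mul_zero, add_zero, log_one, sub_self] at hparts
  linarith

lemma integral_exp_neg_mul_mul_div_one_add (hc : 0 < c) :
    ∫ x in Ioi 0, exp (-(a * x)) * (c / (1 + c * x))
      = exp (a / c) * ∫ t in Ioi 1, t⁻¹ * exp (-t / (c / a)) := by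
  set g : ℝ → ℝ := fun t => exp (a / c) * (t⁻¹ * exp (-t / (c / a)))
  have hg : ∀ x, exp (-(a * x)) * (c / (1 + c * x)) = c * g (1 + c * x) := by
    intro x
    have hexp : exp (a / c) * exp (-(1 + c * x) / (c / a)) = exp (-(a * x)) := by
      rw [← exp_add]
      congr 1
      field_simp
      ring
    simp only [g]
    rw [← hexp]
    field_simp
  simp_rw [hg]
  rw [integral_const_mul, integral_comp_one_add_mul_Ioi g hc, mul_inv_cancel_left₀ hc.ne',
    integral_const_mul]

theorem mul_integral_exp_neg_mul_mul_logb_one_add (ha : 0 < a) (hc : 0 < c) :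
    a * ∫ x in Ioi 0, exp (-(a * x)) * logb 2 (1 + c * x) = C1 (c / a) := by
  rw [← integral_const_mul]
  simp only [← mul_assoc, logb, mul_div_assoc', integral_div]
  rw [integral_mul_exp_neg_mul_mul_log_one_add ha hc.le, integral_exp_neg_mul_mul_div_one_add hc,
    C1, one_div_div]
  ring

end LogLaplace

section ExpScaling

variable {α p : ℝ} {φ : ℝ → ℝ}

lemma exp_neg_div_mul_mul (hp : 0 < p) (x : ℝ) : exp (-(α / p * (p * x))) = exp (-(α * x)) := by
  field_simp

lemma integrableOn_exp_neg_mul_mul_comp_mul (hp : 0 < p)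
    (hφ : IntegrableOn (fun t => exp (-(α / p * t)) * φ t) (Ioi 0)) :
    IntegrableOn (fun x => exp (-(α * x)) * φ (p * x)) (Ioi 0) := by
  have h := (integrableOn_Ioi_comp_mul_left_iff (fun t => exp (-(α / p * t)) * φ t) 0 hp).mpr
    (by rwa [mul_zero])
  simpa only [exp_neg_div_mul_mul hp] using h

lemma integral_exp_neg_mul_mul_comp_mul (hp : 0 < p) :
    ∫ x in Ioi 0, exp (-(α * x)) * φ (p * x) = p⁻¹ * ∫ t in Ioi 0, exp (-(α / p * t)) * φ t := by
  have h := integral_comp_mul_left_Ioi (fun t => exp (-(α / p * t)) * φ t) 0 hp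
  simpa only [exp_neg_div_mul_mul hp, mul_zero, smul_eq_mul] using h

end ExpScaling

lemma integral_integral_eq_of_eqOn {X Y : Type*} [MeasurableSpace X] [MeasurableSpace Y]
    {μ : Measure X} {ν : Measure Y} [SFinite μ] [SFinite ν] {s : Set X} {t : Set Y}
    (hs : MeasurableSet s) (ht : MeasurableSet t) {f : X → Y → ℝ} {g : X × Y → ℝ}
    (hg : Integrable g ((μ.restrict s).prod (ν.restrict t)))
    (hfg : ∀ x ∈ s, ∀ y ∈ t, f x y = g (x, y)) :
    ∫ x in s, ∫ y in t, f x y ∂ν ∂μ = ∫ z, g z ∂(μ.restrict s).prod (ν.restrict t) := by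
  have hae : ∀ᵐ z ∂(μ.restrict s).prod (ν.restrict t), f z.1 z.2 = g z := by
    rw [Measure.prod_restrict]
    filter_upwards [ae_restrict_mem (hs.prod ht)] with z ⟨hz1, hz2⟩
    exact hfg z.1 hz1 z.2 hz2
  rw [integral_integral (hg.congr (hae.mono fun z hz => hz.symm)), integral_congr_ae hae]

section MinOfExponentials

noncomputable def prodExpDensity (α β : ℝ) (z : ℝ × ℝ) : ℝ :=
  α * exp (-(α * z.1)) * (β * exp (-(β * z.2)))

variable {α β p q : ℝ} {φ : ℝ → ℝ}

local notation "μ₊" => volume.restrict (Ioi (0 : ℝ))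

lemma integrableOn_mul_exp_neg_mul (hα : 0 < α) :
    IntegrableOn (fun x => α * exp (-(α * x))) (Ioi 0) := by
  simpa only [IntegrableOn, neg_mul] using (exp_neg_integrableOn_Ioi 0 hα).const_mul α

lemma integrable_prodExpDensity_mul_comp_fst (hβ : 0 < β) (hp : 0 < p)
    (hφ : IntegrableOn (fun t => exp (-(α / p * t)) * φ t) (Ioi 0)) :
    Integrable (fun z => prodExpDensity α β z * φ (p * z.1)) (μ₊.prod μ₊) := by
  refine (((integrableOn_exp_neg_mul_mul_comp_mul hp hφ).const_mul α).mul_prod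
    (integrableOn_mul_exp_neg_mul hβ)).congr (ae_of_all _ fun z => ?_)
  simp only [prodExpDensity]
  ring

lemma integrable_prodExpDensity_mul_comp_snd (hα : 0 < α) (hq : 0 < q)
    (hφ : IntegrableOn (fun t => exp (-(β / q * t)) * φ t) (Ioi 0)) :
    Integrable (fun z => prodExpDensity α β z * φ (q * z.2)) (μ₊.prod μ₊) := by
  refine ((integrableOn_mul_exp_neg_mul hα).mul_prod
    ((integrableOn_exp_neg_mul_mul_comp_mul hq hφ).const_mul β)).congr (ae_of_all _ fun z => ?_)
  simp only [prodExpDensity]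
  ring

lemma integral_prodExpDensity_mul_comp_fst (hβ : 0 < β) (hp : 0 < p) :
    ∫ z, prodExpDensity α β z * φ (p * z.1) ∂(μ₊.prod μ₊)
      = α / p * ∫ t in Ioi 0, exp (-(α / p * t)) * φ t := by
  have h : (fun z => prodExpDensity α β z * φ (p * z.1))
      = fun z => α * (exp (-(α * z.1)) * φ (p * z.1)) * (β * exp (-(β * z.2))) := by
    ext z
    simp only [prodExpDensity]
    ring
  rw [h, integral_prod_mul (fun x => α * (exp (-(α * x)) * φ (p * x)))
      (fun y => β * exp (-(β * y))),
    integral_Ioi_mul_exp_neg_mul hβ, integral_const_mul, integral_exp_neg_mul_mul_comp_mul hp,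
    mul_zero, neg_zero, exp_zero]
  ring

lemma integral_prodExpDensity_mul_comp_snd (hα : 0 < α) (hq : 0 < q) :
    ∫ z, prodExpDensity α β z * φ (q * z.2) ∂(μ₊.prod μ₊)
      = β / q * ∫ t in Ioi 0, exp (-(β / q * t)) * φ t := by
  have h : (fun z => prodExpDensity α β z * φ (q * z.2))
      = fun z => α * exp (-(α * z.1)) * (β * (exp (-(β * z.2)) * φ (q * z.2))) := by
    ext z
    simp only [prodExpDensity]
    ring
  rw [h, integral_prod_mul (fun x => α * exp (-(α * x)))
      (fun y => β * (exp (-(β * y)) * φ (q * y))),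
    integral_Ioi_mul_exp_neg_mul hα, integral_const_mul, integral_exp_neg_mul_mul_comp_mul hq,
    mul_zero, neg_zero, exp_zero]
  ring

lemma mul_comp_min_eq_indicator_add_indicator (F : ℝ × ℝ → ℝ) (φ : ℝ → ℝ) (p q : ℝ)
    (z : ℝ × ℝ) :
    F z * φ (min (p * z.1) (q * z.2))
      = {z : ℝ × ℝ | q * z.2 ≤ p * z.1}.indicator (fun z => F z * φ (q * z.2)) z
        + {z : ℝ × ℝ | q * z.2 ≤ p * z.1}ᶜ.indicator (fun z => F z * φ (p * z.1)) z := by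
  by_cases h : q * z.2 ≤ p * z.1
  · simp [h]
  · simp [h, min_eq_left (le_of_not_ge h)]

lemma integral_indicator_le_prodExpDensity_mul_comp_snd (hα : 0 < α) (hp : 0 < p) (hq : 0 < q)
    (hφ : IntegrableOn (fun t => exp (-(β / q * t)) * φ t) (Ioi 0)) :
    ∫ z, {z : ℝ × ℝ | q * z.2 ≤ p * z.1}.indicator
        (fun z => prodExpDensity α β z * φ (q * z.2)) z ∂(μ₊.prod μ₊)
      = β / q * ∫ t in Ioi 0, exp (-((α / p + β / q) * t)) * φ t := by
  rw [integral_prod_symm _ ((integrable_prodExpDensity_mul_comp_snd hα hq hφ).indicator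
    (measurableSet_le (by fun_prop) (by fun_prop)))]
  have hinner : ∀ y ∈ Ioi (0 : ℝ), ∫ x in Ioi 0, {z : ℝ × ℝ | q * z.2 ≤ p * z.1}.indicator
        (fun z => prodExpDensity α β z * φ (q * z.2)) (x, y)
      = β * (exp (-((α * q / p + β) * y)) * φ (q * y)) := by
    intro y (hy : 0 < y)
    have hsection : ∀ x, {z : ℝ × ℝ | q * z.2 ≤ p * z.1}.indicator
          (fun z => prodExpDensity α β z * φ (q * z.2)) (x, y)
        = (Ici (q * y / p)).indicator (fun x => α * exp (-(α * x))) x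
          * (β * exp (-(β * y)) * φ (q * y)) := by
      intro x
      simp only [indicator_apply, mem_ofPred_eq, mem_Ici, div_le_iff₀' hp, prodExpDensity]
      split_ifs <;> ring
    have hexp : exp (-(α * (q * y / p))) * exp (-(β * y)) = exp (-((α * q / p + β) * y)) := by
      rw [← exp_add]
      ring_nf
    simp_rw [hsection]
    rw [integral_mul_const, setIntegral_indicator measurableSet_Ici,
      inter_eq_right.mpr (Ici_subset_Ioi.mpr (by positivity)), integral_Ici_eq_integral_Ioi,
      integral_Ioi_mul_exp_neg_mul hα, ← hexp]
    ring
  rw [setIntegral_congr_fun measurableSet_Ioi hinner, integral_const_mul,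
    integral_exp_neg_mul_mul_comp_mul hq, show (α * q / p + β) / q = α / p + β / q by field_simp]
  field_simp

lemma integral_indicator_compl_le_prodExpDensity_mul_comp_fst (hβ : 0 < β) (hp : 0 < p)
    (hq : 0 < q) (hφ : IntegrableOn (fun t => exp (-(α / p * t)) * φ t) (Ioi 0)) :
    ∫ z, {z : ℝ × ℝ | q * z.2 ≤ p * z.1}ᶜ.indicator
        (fun z => prodExpDensity α β z * φ (p * z.1)) z ∂(μ₊.prod μ₊)
      = α / p * ∫ t in Ioi 0, exp (-((α / p + β / q) * t)) * φ t := by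
  rw [integral_prod _ ((integrable_prodExpDensity_mul_comp_fst hβ hp hφ).indicator
    (measurableSet_le (by fun_prop) (by fun_prop)).compl)]
  have hinner : ∀ x ∈ Ioi (0 : ℝ), ∫ y in Ioi 0, {z : ℝ × ℝ | q * z.2 ≤ p * z.1}ᶜ.indicator
        (fun z => prodExpDensity α β z * φ (p * z.1)) (x, y)
      = α * (exp (-((β * p / q + α) * x)) * φ (p * x)) := by
    intro x (hx : 0 < x)
    have hsection : ∀ y, {z : ℝ × ℝ | q * z.2 ≤ p * z.1}ᶜ.indicator
          (fun z => prodExpDensity α β z * φ (p * z.1)) (x, y)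
        = (α * exp (-(α * x)) * φ (p * x))
          * (Ioi (p * x / q)).indicator (fun y => β * exp (-(β * y))) y := by
      intro y
      simp only [indicator_apply, mem_compl_iff, mem_ofPred_eq, not_le, mem_Ioi,
        div_lt_iff₀' hq, prodExpDensity]
      split_ifs <;> ring
    have hexp : exp (-(α * x)) * exp (-(β * (p * x / q))) = exp (-((β * p / q + α) * x)) := by
      rw [← exp_add]
      ring_nf
    simp_rw [hsection]
    rw [integral_const_mul, setIntegral_indicator measurableSet_Ioi,
      inter_eq_right.mpr (Ioi_subset_Ioi (by positivity)), integral_Ioi_mul_exp_neg_mul hβ,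
      mul_right_comm, mul_assoc α, hexp]
    ring
  rw [setIntegral_congr_fun measurableSet_Ioi hinner, integral_const_mul,
    integral_exp_neg_mul_mul_comp_mul hp,
    show (β * p / q + α) / p = α / p + β / q by field_simp; ring]
  field_simp

lemma integrable_prodExpDensity_mul_comp_min (hα : 0 < α) (hβ : 0 < β) (hp : 0 < p) (hq : 0 < q)
    (hφp : IntegrableOn (fun t => exp (-(α / p * t)) * φ t) (Ioi 0))
    (hφq : IntegrableOn (fun t => exp (-(β / q * t)) * φ t) (Ioi 0)) :
    Integrable (fun z => prodExpDensity α β z * φ (min (p * z.1) (q * z.2))) (μ₊.prod μ₊) := by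
  simp_rw [mul_comp_min_eq_indicator_add_indicator (prodExpDensity α β)]
  exact ((integrable_prodExpDensity_mul_comp_snd hα hq hφq).indicator
    (measurableSet_le (by fun_prop) (by fun_prop))).add
    ((integrable_prodExpDensity_mul_comp_fst hβ hp hφp).indicator
    (measurableSet_le (by fun_prop) (by fun_prop)).compl)

theorem integral_prodExpDensity_mul_comp_min (hα : 0 < α) (hβ : 0 < β) (hp : 0 < p) (hq : 0 < q)
    (hφp : IntegrableOn (fun t => exp (-(α / p * t)) * φ t) (Ioi 0))
    (hφq : IntegrableOn (fun t => exp (-(β / q * t)) * φ t) (Ioi 0)) :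
    ∫ z, prodExpDensity α β z * φ (min (p * z.1) (q * z.2)) ∂(μ₊.prod μ₊)
      = (α / p + β / q) * ∫ t in Ioi 0, exp (-((α / p + β / q) * t)) * φ t := by
  simp_rw [mul_comp_min_eq_indicator_add_indicator (prodExpDensity α β)]
  rw [integral_add ((integrable_prodExpDensity_mul_comp_snd hα hq hφq).indicator
    (measurableSet_le (by fun_prop) (by fun_prop)))
    ((integrable_prodExpDensity_mul_comp_fst hβ hp hφp).indicator
    (measurableSet_le (by fun_prop) (by fun_prop)).compl),
    integral_indicator_le_prodExpDensity_mul_comp_snd hα hp hq hφq,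
    integral_indicator_compl_le_prodExpDensity_mul_comp_fst hβ hp hq hφp]
  ring

end MinOfExponentials

section NOMARate

variable {γ1 γ2 s : ℝ}

lemma logb_one_add_div_eq_sub (hs : 0 < s) (hγ2 : 0 ≤ γ2) (hsum : γ1 + γ2 = 1) {u : ℝ}
    (hu : 0 ≤ u) :
    logb 2 (1 + γ1 * u / (γ2 * u + s)) = logb 2 (1 + s⁻¹ * u) - logb 2 (1 + γ2 / s * u) := by
  rw [← logb_div (by positivity) (by positivity)]
  congr 1
  have hd : γ2 * u + s ≠ 0 := by positivity
  rw [show γ1 = 1 - γ2 by linarith]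
  field_simp
  ring

lemma monotoneOn_logb_one_add_div (hs : 0 < s) (hγ1 : 0 ≤ γ1) (hγ2 : 0 ≤ γ2) :
    MonotoneOn (fun u => logb 2 (1 + γ1 * u / (γ2 * u + s))) (Ici 0) := by
  intro u (hu : 0 ≤ u) v (hv : 0 ≤ v) huv
  refine logb_le_logb_of_le (by norm_num) (by positivity) ?_
  rw [add_le_add_iff_left, div_le_div_iff₀ (by positivity) (by positivity)]
  nlinarith [mul_nonneg (mul_nonneg hγ1 hs.le) (sub_nonneg.2 huv)]

lemma max_logb_one_add_div_add_logb (hs : 0 < s) (hγ1 : 0 ≤ γ1) (hγ2 : 0 ≤ γ2)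
    (hsum : γ1 + γ2 = 1) {u v : ℝ} (hu : 0 ≤ u) (hv : 0 ≤ v) :
    max (logb 2 (1 + γ1 * u / (γ2 * u + s))) (logb 2 (1 + γ1 * v / (γ2 * v + s)))
        + logb 2 (1 + γ2 * v / s)
      = logb 2 (1 + γ1 * u / (γ2 * u + s)) + logb 2 (1 + s⁻¹ * v)
        - logb 2 (1 + γ1 * min u v / (γ2 * min u v + s)) := by
  set R : ℝ → ℝ := fun u => logb 2 (1 + γ1 * u / (γ2 * u + s))
  have hmax : R (max u v) = max (R u) (R v) :=
    (monotoneOn_logb_one_add_div hs hγ1 hγ2).map_max hu hv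
  have hmax_add_min : R (max u v) + R (min u v) = R u + R v := by
    rcases le_total u v with h | h <;> simp [h, add_comm]
  have hv' := logb_one_add_div_eq_sub hs hγ2 hsum hv
  rw [div_mul_eq_mul_div] at hv'
  simp only [R] at hmax hmax_add_min
  linarith

lemma integrableOn_exp_neg_mul_mul_logb_one_add_div {r : ℝ} (hr : 0 < r) (hs : 0 < s)
    (hγ2 : 0 ≤ γ2) (hsum : γ1 + γ2 = 1) :
    IntegrableOn (fun t => exp (-(r * t)) * logb 2 (1 + γ1 * t / (γ2 * t + s))) (Ioi 0) := by
  refine ((integrableOn_exp_neg_mul_mul_logb_one_add hr (inv_pos.2 hs).le).sub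
    (integrableOn_exp_neg_mul_mul_logb_one_add hr (div_nonneg hγ2 hs.le))).congr_fun
    (fun t (ht : 0 < t) => ?_) measurableSet_Ioi
  rw [Pi.sub_apply, logb_one_add_div_eq_sub hs hγ2 hsum ht.le, mul_sub]

lemma mul_integral_exp_neg_mul_mul_logb_one_add_div {r : ℝ} (hr : 0 < r) (hs : 0 < s)
    (hγ2 : 0 < γ2) (hsum : γ1 + γ2 = 1) :
    r * ∫ t in Ioi 0, exp (-(r * t)) * logb 2 (1 + γ1 * t / (γ2 * t + s))
      = C1 (s⁻¹ / r) - C1 (γ2 / s / r) := by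
  rw [setIntegral_congr_fun measurableSet_Ioi (fun t (ht : 0 < t) => by
      rw [logb_one_add_div_eq_sub hs hγ2.le hsum ht.le, mul_sub]),
    integral_sub (integrableOn_exp_neg_mul_mul_logb_one_add hr (inv_pos.2 hs).le)
      (integrableOn_exp_neg_mul_mul_logb_one_add hr (div_nonneg hγ2.le hs.le)),
    mul_sub, mul_integral_exp_neg_mul_mul_logb_one_add hr (inv_pos.2 hs),
    mul_integral_exp_neg_mul_mul_logb_one_add hr (div_pos hγ2 hs)]

lemma sumRate_integrand_eq {L1 L2 x1 x2 : ℝ} (hs : 0 < s) (hγ1 : 0 ≤ γ1)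
    (hγ2 : 0 ≤ γ2) (hsum : γ1 + γ2 = 1) (hx1 : 0 ≤ L1 * x1) (hx2 : 0 ≤ L2 * x2) :
    (1/4) * exp (-x1/2) * exp (-x2/2) *
        (max (logb 2 (1 + γ1 * L1 * x1 / (γ2 * L1 * x1 + s)))
             (logb 2 (1 + γ1 * L2 * x2 / (γ2 * L2 * x2 + s)))
          + logb 2 (1 + γ2 * L2 * x2 / s))
      = prodExpDensity (1 / 2) (1 / 2) (x1, x2)
          * logb 2 (1 + γ1 * (L1 * x1) / (γ2 * (L1 * x1) + s))
        + prodExpDensity (1 / 2) (1 / 2) (x1, x2) * logb 2 (1 + s⁻¹ * (L2 * x2))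
        - prodExpDensity (1 / 2) (1 / 2) (x1, x2) * logb 2 (1 + γ1 * min (L1 * x1) (L2 * x2)
            / (γ2 * min (L1 * x1) (L2 * x2) + s)) := by
  rw [mul_assoc γ1 L1, mul_assoc γ2 L1, mul_assoc γ1 L2, mul_assoc γ2 L2,
    max_logb_one_add_div_add_logb hs hγ1 hγ2 hsum hx1 hx2, prodExpDensity,
    show -x1 / 2 = -(1 / 2 * x1) by ring, show -x2 / 2 = -(1 / 2 * x2) by ring]
  ring

end NOMARate

theorem stmt3 (L1 L2 σ2 γ1 γ2 : ℝ) (hL1 : 0 < L1) (hL2 : 0 < L2) (hσ : 0 < σ2)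
    (hγ1 : γ1 ∈ Set.Ioo (0:ℝ) 1) (hγ2 : γ2 ∈ Set.Ioo (0:ℝ) 1) (hsum : γ1 + γ2 = 1) :
    (∫ x1 in Set.Ioi (0:ℝ), ∫ x2 in Set.Ioi (0:ℝ),
      (1/4) * Real.exp (-x1/2) * Real.exp (-x2/2) *
        (max (Real.logb 2 (1 + γ1 * L1 * x1 / (γ2 * L1 * x1 + 2 * σ2)))
             (Real.logb 2 (1 + γ1 * L2 * x2 / (γ2 * L2 * x2 + 2 * σ2)))
          + Real.logb 2 (1 + γ2 * L2 * x2 / (2 * σ2))))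
      = C1 (L1 / σ2) - C1 (γ2 * L1 / σ2) + C1 (L2 / σ2)
        - C1 (L1 * L2 / ((L1 + L2) * σ2)) + C1 (γ2 * L1 * L2 / ((L1 + L2) * σ2)) := by
  have hs : 0 < 2 * σ2 := by positivity
  set R : ℝ → ℝ := fun t => logb 2 (1 + γ1 * t / (γ2 * t + 2 * σ2))
  set ℓ : ℝ → ℝ := fun t => logb 2 (1 + (2 * σ2)⁻¹ * t)
  have hR : ∀ r > 0, IntegrableOn (fun t => exp (-(r * t)) * R t) (Ioi 0) :=
    fun r hr => integrableOn_exp_neg_mul_mul_logb_one_add_div hr hs hγ2.1.le hsum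
  have hA := integrable_prodExpDensity_mul_comp_fst (α := 1 / 2) (β := 1 / 2) (φ := R)
    (by norm_num) hL1 (hR _ (by positivity))
  have hB := integrable_prodExpDensity_mul_comp_snd (α := 1 / 2) (β := 1 / 2) (φ := ℓ)
    (by norm_num) hL2 (integrableOn_exp_neg_mul_mul_logb_one_add (by positivity) (by positivity))
  have hM := integrable_prodExpDensity_mul_comp_min (α := 1 / 2) (β := 1 / 2) (φ := R)
    (by norm_num) (by norm_num) hL1 hL2 (hR _ (by positivity)) (hR _ (by positivity))
  rw [integral_integral_eq_of_eqOn measurableSet_Ioi measurableSet_Ioi ((hA.add hB).sub hM)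
      fun x1 hx1 x2 hx2 => sumRate_integrand_eq hs hγ1.1.le hγ2.1.le hsum
        (mul_pos hL1 hx1).le (mul_pos hL2 hx2).le,
    integral_sub' (hA.add hB) hM, integral_add' hA hB,
    integral_prodExpDensity_mul_comp_fst (by norm_num) hL1,
    integral_prodExpDensity_mul_comp_snd (by norm_num) hL2,
    integral_prodExpDensity_mul_comp_min (by norm_num) (by norm_num) hL1 hL2
      (hR _ (by positivity)) (hR _ (by positivity)),
    mul_integral_exp_neg_mul_mul_logb_one_add_div (by positivity) hs hγ2.1 hsum,
    mul_integral_exp_neg_mul_mul_logb_one_add_div (by positivity) hs hγ2.1 hsum,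
    mul_integral_exp_neg_mul_mul_logb_one_add (by positivity) (by positivity),
    show (2 * σ2)⁻¹ / (1 / 2 / L1) = L1 / σ2 by field_simp,
    show γ2 / (2 * σ2) / (1 / 2 / L1) = γ2 * L1 / σ2 by field_simp,
    show (2 * σ2)⁻¹ / (1 / 2 / L2) = L2 / σ2 by field_simp,
    show (2 * σ2)⁻¹ / (1 / 2 / L1 + 1 / 2 / L2) = L1 * L2 / ((L1 + L2) * σ2) by
      field_simp; ring,
    show γ2 / (2 * σ2) / (1 / 2 / L1 + 1 / 2 / L2) = γ2 * L1 * L2 / ((L1 + L2) * σ2) by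
      field_simp; ring]
  ring
end

section
/- Let L₁, L₂, σ² > 0 and γ₁, γ₂ ∈ (0,1) with γ₁ + γ₂ = 1. Then ∫_0^∞ ∫_0^∞ (1/4) e^{-x₁/2} e^{-x₂/2} · max{ log₂(1 + γ₁L₁x₁/(γ₂L₁x₁ + 2σ²)), log₂(1 + γ₁L₂x₂/(γ₂L₂x₂ + 2σ²)) } dx₁ dx₂ = C₁(L₁/σ²) − C₁(γ₂L₁/σ²) + C₁(L₂/σ²) − C₁(γ₂L₂/σ²) − C₁(L₁L₂/((L₁+L₂)σ²)) + C₁(γ₂L₁L₂/((L₁+L₂)σ²)). -/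
/-!
With `X₁, X₂` independent exponential variables of rate `1/2`, the left-hand side is
`E[R(max(L₁X₁, L₂X₂))]` for the increasing rate function `R(u) = log₂(1 + γ₁u/(γ₂u + 2σ²))`.
Since `R(max a b) + R(min a b) = R a + R b`, and since `LᵢXᵢ` and `min(L₁X₁, L₂X₂)` are again
exponential (of rates `1/(2Lᵢ)` and their sum), everything reduces to `E[R(Y)]` for a single
exponential `Y`. As `R(u) = log₂(1 + u/(2σ²)) - log₂(1 + γ₂u/(2σ²))`, this is a difference of two
integrals `∫₀^∞ e^{-v} log₂(1 + a v) dv`; integration by parts and the substitution `t = 1 + a v`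
turn each into `C₁(a)`.
-/

open Real MeasureTheory Set

open Filter ProbabilityTheory

theorem integral_comp_add_right_Ioi (f : ℝ → ℝ) (a d : ℝ) :
    ∫ x in Ioi a, f (x + d) = ∫ x in Ioi (a + d), f x := by
  have := (measurePreserving_add_right volume d).setIntegral_preimage_emb
    (measurableEmbedding_addRight d) f (Ioi (a + d))
  simpa using this

theorem log_one_add_mul_mem_Icc {a v : ℝ} (ha : 0 ≤ a) (hv : 0 ≤ v) :
    log (1 + a * v) ∈ Icc 0 (a * v) := by
  have hpos : 1 ≤ 1 + a * v := by nlinarith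
  exact ⟨log_nonneg hpos, by linarith [log_le_sub_one_of_pos (by linarith : 0 < 1 + a * v)]⟩

theorem integrableOn_exp_neg_mul_log_one_add {a : ℝ} (ha : 0 ≤ a) :
    IntegrableOn (fun v => exp (-v) * log (1 + a * v)) (Ioi 0) := by
  have hmoment : IntegrableOn (fun v => exp (-v) * v) (Ioi 0) := by
    simpa [show (2 : ℝ) - 1 = 1 by norm_num] using GammaIntegral_convergent two_pos
  refine (hmoment.const_mul a).mono' (by fun_prop) ?_
  filter_upwards [ae_restrict_mem measurableSet_Ioi] with v (hv : 0 < v)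
  obtain ⟨hlog_nonneg, hlog_le⟩ := log_one_add_mul_mem_Icc ha hv.le
  rw [norm_mul, norm_of_nonneg (exp_pos _).le, norm_of_nonneg hlog_nonneg]
  nlinarith [exp_pos (-v)]

theorem integrableOn_exp_neg_mul_div_one_add {a : ℝ} (ha : 0 ≤ a) :
    IntegrableOn (fun v => exp (-v) * (a / (1 + a * v))) (Ioi 0) := by
  refine ((exp_neg_integrableOn_Ioi 0 one_pos).mul_const a).mono' (by fun_prop) ?_
  filter_upwards [ae_restrict_mem measurableSet_Ioi] with v (hv : 0 < v)
  have hdiv : a / (1 + a * v) ≤ a := div_le_self ha (by nlinarith)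
  rw [norm_mul, norm_of_nonneg (exp_pos _).le, norm_of_nonneg (by positivity), neg_one_mul]
  exact mul_le_mul_of_nonneg_left hdiv (exp_pos _).le

theorem integral_exp_neg_mul_log_one_add {a : ℝ} (ha : 0 < a) :
    ∫ v in Ioi 0, exp (-v) * log (1 + a * v) = ∫ v in Ioi 0, exp (-v) * (a / (1 + a * v)) := by
  have hderiv : ∀ v ∈ Ici (0 : ℝ), HasDerivAt (fun v : ℝ => -exp (-v) * log (1 + a * v))
      (exp (-v) * log (1 + a * v) - exp (-v) * (a / (1 + a * v))) v := by
    intro v (hv : 0 ≤ v)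
    have hlin : HasDerivAt (fun v : ℝ => 1 + a * v) a v := by
      simpa using ((hasDerivAt_id v).const_mul a).const_add 1
    have hexp : HasDerivAt (fun v : ℝ => -exp (-v)) (exp (-v)) v := by
      simpa using (hasDerivAt_id v).fun_neg.exp.fun_neg
    have hpos : 1 + a * v ≠ 0 := by positivity
    exact (hexp.fun_mul (hlin.log hpos)).congr_deriv (by ring)
  have hlim : Tendsto (fun v => -exp (-v) * log (1 + a * v)) atTop (nhds 0) := by
    refine squeeze_zero_norm' ?_
      (by simpa using (tendsto_pow_mul_exp_neg_atTop_nhds_zero 1).const_mul a)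
    filter_upwards [eventually_gt_atTop 0] with v hv
    obtain ⟨hlog_nonneg, hlog_le⟩ := log_one_add_mul_mem_Icc ha.le hv.le
    rw [norm_mul, norm_neg, norm_of_nonneg (exp_pos _).le, norm_of_nonneg hlog_nonneg]
    nlinarith [exp_pos (-v)]
  have hint := integrableOn_exp_neg_mul_log_one_add ha.le
  have hint' := integrableOn_exp_neg_mul_div_one_add ha.le
  have hftc := integral_Ioi_of_hasDerivAt_of_tendsto' hderiv (hint.sub hint') hlim
  rw [integral_sub hint hint'] at hftc
  simp only [neg_zero, exp_zero, mul_zero, add_zero, log_one, sub_zero] at hftc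
  linarith

theorem integral_exp_neg_mul_div_one_add {a : ℝ} (ha : 0 < a) :
    ∫ v in Ioi 0, exp (-v) * (a / (1 + a * v))
      = exp (1 / a) * ∫ t in Ioi 1, t⁻¹ * exp (-t / a) := by
  have hsubst : ∫ t in Ioi 1, t⁻¹ * exp (-t / a)
      = a * ∫ v in Ioi 0, (a * (v + 1 / a))⁻¹ * exp (-(a * (v + 1 / a)) / a) := by
    rw [integral_comp_add_right_Ioi (fun s => (a * s)⁻¹ * exp (-(a * s) / a)), zero_add,
      integral_comp_mul_left_Ioi (fun t => t⁻¹ * exp (-t / a)) _ ha, smul_eq_mul,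
      mul_one_div_cancel ha.ne', mul_inv_cancel_left₀ ha.ne']
  rw [hsubst, ← integral_const_mul, ← integral_const_mul]
  refine setIntegral_congr_fun measurableSet_Ioi fun v (hv : 0 < v) => ?_
  have hpos : 0 < 1 + a * v := by positivity
  rw [show a * (v + 1 / a) = 1 + a * v by field_simp; ring,
    show -(1 + a * v) / a = -v + -(1 / a) by field_simp; ring, exp_add, exp_neg (1 / a)]
  field_simp

theorem integral_exp_neg_mul_logb_one_add {a : ℝ} (ha : 0 < a) :
    ∫ v in Ioi 0, exp (-v) * logb 2 (1 + a * v) = C1 a := by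
  simp only [logb, mul_div_assoc', integral_div]
  rw [integral_exp_neg_mul_log_one_add ha, integral_exp_neg_mul_div_one_add ha, C1]
  ring

theorem integral_expMeasure {r : ℝ} (hr : 0 < r) (f : ℝ → ℝ) :
    ∫ x, f x ∂expMeasure r = ∫ x in Ioi 0, r * exp (-(r * x)) * f x := by
  have hdens : expMeasure r = volume.withDensity (exponentialPDF r) := rfl
  have hmeas : Measurable (exponentialPDF r) := (measurable_exponentialPDFReal r).ennreal_ofReal
  rw [hdens, integral_withDensity_eq_integral_toReal_smul hmeas
    (ae_of_all _ fun _ => ENNReal.ofReal_lt_top),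
    ← integral_Ici_eq_integral_Ioi, ← integral_indicator measurableSet_Ici]
  congr 1 with x
  by_cases hx : 0 ≤ x
  · rw [indicator_of_mem (mem_Ici.mpr hx), exponentialPDF_of_nonneg hx,
      ENNReal.toReal_ofReal (by positivity), smul_eq_mul]
  · rw [indicator_of_notMem (by simpa using hx), exponentialPDF_of_neg (not_le.mp hx)]
    simp

theorem integral_expMeasure_eq_integral_exp_neg {r : ℝ} (hr : 0 < r) (f : ℝ → ℝ) :
    ∫ x, f x ∂expMeasure r = ∫ v in Ioi 0, exp (-v) * f (v / r) := by
  have hscale := integral_comp_mul_left_Ioi' (fun v => exp (-v) * f (v / r)) 0 hr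
  rw [mul_zero] at hscale
  rw [integral_expMeasure hr, ← hscale, smul_eq_mul, ← integral_const_mul]
  refine setIntegral_congr_fun measurableSet_Ioi fun x _ => ?_
  rw [mul_div_cancel_left₀ x hr.ne']
  ring

theorem ae_nonneg_expMeasure (r : ℝ) : ∀ᵐ x ∂expMeasure r, 0 ≤ x := by
  refine (ae_withDensity_iff (measurable_exponentialPDFReal r).ennreal_ofReal).mpr
    (ae_of_all _ fun x hx => ?_)
  by_contra hneg
  exact hx (exponentialPDF_of_neg (not_le.mp hneg))

theorem expMeasure_map_const_mul {r c : ℝ} (hr : 0 < r) (hc : 0 < c) :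
    (expMeasure r).map (c * ·) = expMeasure (r / c) := by
  have := isProbabilityMeasure_expMeasure hr
  have := isProbabilityMeasure_expMeasure (div_pos hr hc)
  have : IsProbabilityMeasure ((expMeasure r).map (c * ·)) :=
    Measure.isProbabilityMeasure_map (by fun_prop)
  refine Measure.eq_of_cdf _ _ (StieltjesFunction.ext fun x => ?_)
  rw [cdf_eq_real, map_measureReal_apply (by fun_prop) measurableSet_Iic,
    preimage_const_mul_Iic₀ x hc, ← cdf_eq_real, cdf_expMeasure_eq hr,
    cdf_expMeasure_eq (div_pos hr hc)]
  simp only [le_div_iff₀ hc, zero_mul, div_mul_eq_mul_div, mul_div_assoc]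

theorem measureReal_Ioi_expMeasure {r : ℝ} (hr : 0 < r) (x : ℝ) :
    (expMeasure r).real (Ioi x) = if 0 ≤ x then exp (-(r * x)) else 1 := by
  have := isProbabilityMeasure_expMeasure hr
  rw [← compl_Iic, probReal_compl_eq_one_sub measurableSet_Iic, ← cdf_eq_real,
    cdf_expMeasure_eq hr]
  split_ifs <;> ring

theorem expMeasure_prod_map_min {a b : ℝ} (ha : 0 < a) (hb : 0 < b) :
    ((expMeasure a).prod (expMeasure b)).map (fun z => min z.1 z.2) = expMeasure (a + b) := by
  have := isProbabilityMeasure_expMeasure ha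
  have := isProbabilityMeasure_expMeasure hb
  have := isProbabilityMeasure_expMeasure (add_pos ha hb)
  have : IsProbabilityMeasure
      (((expMeasure a).prod (expMeasure b)).map (fun z => min z.1 z.2)) :=
    Measure.isProbabilityMeasure_map (by fun_prop)
  refine Measure.eq_of_cdf _ _ (StieltjesFunction.ext fun x => ?_)
  have hpre : (fun z : ℝ × ℝ => min z.1 z.2) ⁻¹' Iic x = (Ioi x ×ˢ Ioi x)ᶜ := by
    ext z; simp [or_iff_not_imp_left]
  rw [cdf_eq_real, map_measureReal_apply (by fun_prop) measurableSet_Iic, hpre,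
    probReal_compl_eq_one_sub (measurableSet_Ioi.prod measurableSet_Ioi), measureReal_prod_prod,
    measureReal_Ioi_expMeasure ha, measureReal_Ioi_expMeasure hb,
    cdf_expMeasure_eq (add_pos ha hb)]
  split_ifs
  · rw [← exp_add]; ring_nf
  · ring

theorem integrable_comp_of_ae_nonneg {α : Type*} [MeasurableSpace α] {μ : Measure α}
    [IsFiniteMeasure μ] {g : α → ℝ} {h : ℝ → ℝ} {C : ℝ} (hh : Measurable h)
    (hC : ∀ u, 0 ≤ u → |h u| ≤ C) (hg : AEMeasurable g μ) (hg0 : ∀ᵐ x ∂μ, 0 ≤ g x) :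
    Integrable (fun x => h (g x)) μ :=
  .of_bound (hh.comp_aemeasurable hg).aestronglyMeasurable C (hg0.mono fun _ hx => hC _ hx)

theorem comp_max_add_comp_min {α β : Type*} [LinearOrder α] [AddCommMagma β] (f : α → β)
    (a b : α) :
    f (max a b) + f (min a b) = f a + f b := by
  rcases le_total a b with h | h
  · rw [max_eq_right h, min_eq_left h, add_comm]
  · rw [max_eq_left h, min_eq_right h]

theorem integral_comp_max_expMeasure_prod {a b C : ℝ} (ha : 0 < a) (hb : 0 < b) {f : ℝ → ℝ}
    (hf : Measurable f) (hC : ∀ u, 0 ≤ u → |f u| ≤ C) :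
    ∫ z, f (max z.1 z.2) ∂(expMeasure a).prod (expMeasure b)
      = ∫ x, f x ∂expMeasure a + ∫ y, f y ∂expMeasure b - ∫ w, f w ∂expMeasure (a + b) := by
  have := isProbabilityMeasure_expMeasure ha
  have := isProbabilityMeasure_expMeasure hb
  have hfst : ∀ᵐ z ∂(expMeasure a).prod (expMeasure b), 0 ≤ z.1 :=
    Measure.quasiMeasurePreserving_fst.ae (ae_nonneg_expMeasure a)
  have hsnd : ∀ᵐ z ∂(expMeasure a).prod (expMeasure b), 0 ≤ z.2 :=
    Measure.quasiMeasurePreserving_snd.ae (ae_nonneg_expMeasure b)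
  have imax := integrable_comp_of_ae_nonneg hf hC (by fun_prop)
    ((hfst.and hsnd).mono fun z hz => le_max_of_le_left hz.1)
  have imin := integrable_comp_of_ae_nonneg hf hC (by fun_prop)
    ((hfst.and hsnd).mono fun z hz => le_min hz.1 hz.2)
  have ifst := integrable_comp_of_ae_nonneg hf hC (by fun_prop) hfst
  have isnd := integrable_comp_of_ae_nonneg hf hC (by fun_prop) hsnd
  have hmax_add_min : ∫ z, f (max z.1 z.2) ∂(expMeasure a).prod (expMeasure b)
      + ∫ z, f (min z.1 z.2) ∂(expMeasure a).prod (expMeasure b)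
      = ∫ z, f z.1 ∂(expMeasure a).prod (expMeasure b)
        + ∫ z, f z.2 ∂(expMeasure a).prod (expMeasure b) := by
    rw [← integral_add imax imin, ← integral_add ifst isnd]
    exact integral_congr_ae (ae_of_all _ fun z => comp_max_add_comp_min f z.1 z.2)
  have hmin : ∫ z, f (min z.1 z.2) ∂(expMeasure a).prod (expMeasure b)
      = ∫ w, f w ∂expMeasure (a + b) := by
    rw [← expMeasure_prod_map_min ha hb, integral_map (by fun_prop) hf.aestronglyMeasurable]
  rw [integral_fun_fst, integral_fun_snd, hmin] at hmax_add_min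
  simp only [probReal_univ, one_smul] at hmax_add_min
  linarith

theorem integral_Ioi_integral_Ioi_eq_integral_expMeasure_prod {a b : ℝ} (ha : 0 < a)
    (hb : 0 < b) {F : ℝ × ℝ → ℝ} (hF : Integrable F ((expMeasure a).prod (expMeasure b))) :
    ∫ x in Ioi 0, ∫ y in Ioi 0, a * exp (-(a * x)) * (b * exp (-(b * y)) * F (x, y))
      = ∫ z, F z ∂(expMeasure a).prod (expMeasure b) := by
  have := isProbabilityMeasure_expMeasure ha
  have := isProbabilityMeasure_expMeasure hb
  rw [integral_prod _ hF, integral_expMeasure ha]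
  refine setIntegral_congr_fun measurableSet_Ioi fun x _ => ?_
  rw [integral_expMeasure hb, integral_const_mul]

theorem integral_Ioi_integral_Ioi_comp_max {a b p q C : ℝ} (ha : 0 < a) (hb : 0 < b)
    (hp : 0 < p) (hq : 0 < q) {f : ℝ → ℝ} (hf : Measurable f) (hC : ∀ u, 0 ≤ u → |f u| ≤ C) :
    ∫ x in Ioi 0, ∫ y in Ioi 0,
        a * exp (-(a * x)) * (b * exp (-(b * y)) * f (max (p * x) (q * y)))
      = ∫ u, f u ∂expMeasure (a / p) + ∫ u, f u ∂expMeasure (b / q)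
        - ∫ u, f u ∂expMeasure (a / p + b / q) := by
  have := isProbabilityMeasure_expMeasure ha
  have := isProbabilityMeasure_expMeasure hb
  have hF : Integrable (fun z : ℝ × ℝ => f (max (p * z.1) (q * z.2)))
      ((expMeasure a).prod (expMeasure b)) := by
    refine integrable_comp_of_ae_nonneg hf hC (by fun_prop) ?_
    filter_upwards [Measure.quasiMeasurePreserving_fst.ae (ae_nonneg_expMeasure a)] with z hz
    exact le_max_of_le_left (by positivity)
  have hfmax : Measurable fun w : ℝ × ℝ => f (max w.1 w.2) := hf.comp (by fun_prop)
  refine (integral_Ioi_integral_Ioi_eq_integral_expMeasure_prod ha hb hF).trans ?_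
  rw [← integral_comp_max_expMeasure_prod (div_pos ha hp) (div_pos hb hq) hf hC,
    ← expMeasure_map_const_mul ha hp, ← expMeasure_map_const_mul hb hq,
    Measure.map_prod_map _ _ (by fun_prop) (by fun_prop),
    integral_map (by fun_prop) hfmax.aestronglyMeasurable]
  rfl

/-- Rate of the NOMA user decoded first, treating the other user's signal as noise; `u` is the
received power and `c` the noise power. -/
noncomputable def nomaRate (γ1 γ2 c u : ℝ) : ℝ := logb 2 (1 + γ1 * u / (γ2 * u + c))

section NomaRate

variable {γ1 γ2 c : ℝ}

theorem measurable_nomaRate : Measurable (nomaRate γ1 γ2 c) := by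
  unfold nomaRate logb; fun_prop

theorem nomaRate_eq_sub (hsum : γ1 + γ2 = 1) (hγ2 : 0 ≤ γ2) (hc : 0 < c) {u : ℝ} (hu : 0 ≤ u) :
    nomaRate γ1 γ2 c u = logb 2 (1 + c⁻¹ * u) - logb 2 (1 + γ2 * c⁻¹ * u) := by
  have hden : 0 < γ2 * u + c := by positivity
  rw [nomaRate, ← logb_div (by positivity) (by positivity)]
  congr 1
  rw [show γ1 = 1 - γ2 by linarith]
  field_simp
  ring

theorem monotoneOn_nomaRate (hγ1 : 0 ≤ γ1) (hγ2 : 0 ≤ γ2) (hc : 0 < c) :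
    MonotoneOn (nomaRate γ1 γ2 c) (Ici 0) := by
  intro u (hu : 0 ≤ u) v (hv : 0 ≤ v) huv
  have hu' : 0 < γ2 * u + c := by positivity
  have hv' : 0 < γ2 * v + c := by positivity
  refine logb_le_logb_of_le one_lt_two (by positivity) ((add_le_add_iff_left 1).mpr ?_)
  rw [div_le_div_iff₀ hu' hv']
  nlinarith [mul_nonneg (mul_nonneg hγ1 hc.le) (sub_nonneg.mpr huv)]

theorem abs_nomaRate_le (hγ1 : 0 ≤ γ1) (hγ2 : 0 < γ2) (hc : 0 < c) {u : ℝ} (hu : 0 ≤ u) :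
    |nomaRate γ1 γ2 c u| ≤ logb 2 (1 + γ1 / γ2) := by
  have hden : 0 < γ2 * u + c := by positivity
  have hsinr : 0 ≤ γ1 * u / (γ2 * u + c) := by positivity
  rw [nomaRate, abs_of_nonneg (logb_nonneg one_lt_two (by linarith))]
  refine logb_le_logb_of_le one_lt_two (by positivity) ((add_le_add_iff_left 1).mpr ?_)
  rw [div_le_div_iff₀ hden hγ2]
  nlinarith [mul_nonneg hγ1 hc.le]

theorem integral_nomaRate_expMeasure {r : ℝ} (hsum : γ1 + γ2 = 1) (hγ2 : 0 < γ2)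
    (hc : 0 < c) (hr : 0 < r) :
    ∫ u, nomaRate γ1 γ2 c u ∂expMeasure r = C1 (1 / (c * r)) - C1 (γ2 / (c * r)) := by
  have hint : ∀ {k : ℝ}, 0 < k →
      IntegrableOn (fun v => exp (-v) * logb 2 (1 + k * v)) (Ioi 0) :=
    fun hk => by
      simpa only [IntegrableOn, logb, mul_div_assoc'] using
        (integrableOn_exp_neg_mul_log_one_add hk.le).div_const (log 2)
  have hk₁ : 0 < 1 / (c * r) := by positivity
  have hk₂ : 0 < γ2 / (c * r) := by positivity
  rw [integral_expMeasure_eq_integral_exp_neg hr, ← integral_exp_neg_mul_logb_one_add hk₁,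
    ← integral_exp_neg_mul_logb_one_add hk₂, ← integral_sub (hint hk₁) (hint hk₂)]
  refine setIntegral_congr_fun measurableSet_Ioi fun v (hv : 0 < v) => ?_
  rw [nomaRate_eq_sub hsum hγ2.le hc (by positivity), mul_sub]
  congr 4 <;> field_simp

end NomaRate

theorem stmt4 (L1 L2 σ2 γ1 γ2 : ℝ) (hL1 : 0 < L1) (hL2 : 0 < L2) (hσ : 0 < σ2)
    (hγ1 : γ1 ∈ Set.Ioo (0:ℝ) 1) (hγ2 : γ2 ∈ Set.Ioo (0:ℝ) 1) (hsum : γ1 + γ2 = 1) :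
    (∫ x1 in Set.Ioi (0:ℝ), ∫ x2 in Set.Ioi (0:ℝ),
      (1/4) * Real.exp (-x1/2) * Real.exp (-x2/2) *
        max (Real.logb 2 (1 + γ1 * L1 * x1 / (γ2 * L1 * x1 + 2 * σ2)))
            (Real.logb 2 (1 + γ1 * L2 * x2 / (γ2 * L2 * x2 + 2 * σ2))))
      = C1 (L1 / σ2) - C1 (γ2 * L1 / σ2) + C1 (L2 / σ2) - C1 (γ2 * L2 / σ2)
        - C1 (L1 * L2 / ((L1 + L2) * σ2)) + C1 (γ2 * L1 * L2 / ((L1 + L2) * σ2)) := by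
  set R := nomaRate γ1 γ2 (2 * σ2)
  have hc : 0 < 2 * σ2 := by positivity
  have hmono : MonotoneOn R (Ici 0) := monotoneOn_nomaRate hγ1.1.le hγ2.1.le hc
  have hintegrand : ∀ x1 ∈ Ioi (0 : ℝ), ∀ x2 ∈ Ioi (0 : ℝ),
      (1/4) * exp (-x1/2) * exp (-x2/2) *
        max (logb 2 (1 + γ1 * L1 * x1 / (γ2 * L1 * x1 + 2 * σ2)))
            (logb 2 (1 + γ1 * L2 * x2 / (γ2 * L2 * x2 + 2 * σ2)))
      = 1 / 2 * exp (-(1 / 2 * x1)) *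
          (1 / 2 * exp (-(1 / 2 * x2)) * R (max (L1 * x1) (L2 * x2))) := by
    intro x1 (hx1 : 0 < x1) x2 (hx2 : 0 < x2)
    rw [hmono.map_max (mem_Ici.mpr (by positivity)) (mem_Ici.mpr (by positivity))]
    simp only [R, nomaRate, mul_assoc]
    ring_nf
  have hrate : ∀ L, 0 < L →
      ∫ u, R u ∂expMeasure (1 / 2 / L) = C1 (L / σ2) - C1 (γ2 * L / σ2) := by
    intro L hL
    rw [integral_nomaRate_expMeasure hsum hγ2.1 hc (by positivity)]
    congr 2 <;> field_simp
  have hrate_min : 1 / 2 / L1 + 1 / 2 / L2 = 1 / 2 / (L1 * L2 / (L1 + L2)) := by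
    field_simp
    ring
  rw [setIntegral_congr_fun measurableSet_Ioi fun x1 hx1 =>
      setIntegral_congr_fun measurableSet_Ioi (hintegrand x1 hx1),
    integral_Ioi_integral_Ioi_comp_max one_half_pos one_half_pos hL1 hL2 measurable_nomaRate
      fun u hu => abs_nomaRate_le hγ1.1.le hγ2.1 hc hu,
    hrate_min, hrate L1 hL1, hrate L2 hL2, hrate _ (by positivity), div_div, mul_div_assoc',
    div_div, ← mul_assoc]
  ring
end

section
/- Let L₁, L₂, σ² > 0 and γ₂ ∈ (0,1). Then ∫_0^∞ (1/2)(e^{-x/2} − e^{-((L₁+L₂)/(2L₂)) x}) [ log₂(1 + L₁x/(2σ²)) − log₂(1 + γ₂L₁x/(2σ²)) ] dx = C₁(L₁/σ²) − C₁(γ₂L₁/σ²) − (L₂/(L₁+L₂)) [ C₁(L₁L₂/((L₁+L₂)σ²)) − C₁(γ₂L₁L₂/((L₁+L₂)σ²)) ]. -/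
/-!
If `X` has density `l e^{-l x}` on `(0, ∞)`, integrating by parts gives
`E[log₂(1 + a X)] = (a / ln 2) ∫₀^∞ e^{-l x} / (1 + a x) dx`, and the substitution `t = 1 + a x`
turns this into `C₁(a / l)`. Since `(L₂ / (L₁ + L₂)) · (L₁ + L₂) / (2 L₂) = 1 / 2`, the integrand
of the theorem is a signed combination of four such averages, with rates `1/2` and
`(L₁ + L₂) / (2 L₂)` and slopes `L₁ / (2σ²)` and `γ₂ L₁ / (2σ²)`.
-/

open Real MeasureTheory Set

open Filter Topology

section

variable {l a : ℝ}

lemma exp_neg_mul_mul_logb_le (hl : 0 < l) (ha : 0 ≤ a) {x : ℝ} (hx : 0 ≤ x) :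
    exp (-l * x) * logb 2 (1 + a * x) ≤ 2 * a / (l * log 2) * exp (-(l / 2) * x) := by
  have hlog2 : 0 < log 2 := log_pos one_lt_two
  have hlogb : logb 2 (1 + a * x) ≤ a * x / log 2 := by
    rw [logb]
    gcongr
    linarith [log_le_sub_one_of_pos (by positivity : 0 < 1 + a * x)]
  have hdecay : l / 2 * x * exp (-(l / 2 * x)) ≤ 1 :=
    (mul_exp_neg_le_exp_neg_one _).trans (exp_le_one_iff.2 (by norm_num))
  have hsplit : exp (-l * x) = exp (-(l / 2 * x)) * exp (-(l / 2) * x) := by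
    rw [← exp_add]; ring_nf
  calc exp (-l * x) * logb 2 (1 + a * x) ≤ exp (-l * x) * (a * x / log 2) := by gcongr
    _ = 2 * a / (l * log 2) * (l / 2 * x * exp (-(l / 2 * x))) * exp (-(l / 2) * x) := by
      rw [hsplit]; field_simp
    _ ≤ 2 * a / (l * log 2) * 1 * exp (-(l / 2) * x) := by gcongr
    _ = 2 * a / (l * log 2) * exp (-(l / 2) * x) := by rw [mul_one]

lemma integrableOn_exp_neg_mul_mul_logb (hl : 0 < l) (ha : 0 ≤ a) :
    IntegrableOn (fun x => exp (-l * x) * logb 2 (1 + a * x)) (Ioi 0) := by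
  refine ((exp_neg_integrableOn_Ioi 0 (half_pos hl)).const_mul (2 * a / (l * log 2))).mono'
    (by unfold logb; fun_prop) ?_
  filter_upwards [ae_restrict_mem measurableSet_Ioi] with x (hx : 0 < x)
  have hlogb : 0 ≤ logb 2 (1 + a * x) := logb_nonneg one_lt_two (by nlinarith)
  rw [Real.norm_of_nonneg (by positivity)]
  exact exp_neg_mul_mul_logb_le hl ha hx.le

lemma tendsto_exp_neg_mul_mul_logb (hl : 0 < l) (ha : 0 ≤ a) :
    Tendsto (fun x => exp (-l * x) * logb 2 (1 + a * x)) atTop (𝓝 0) := by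
  have hbound : Tendsto (fun x => 2 * a / (l * log 2) * exp (-(l / 2) * x)) atTop (𝓝 0) := by
    simpa using (tendsto_exp_atBot.comp
      (tendsto_id.const_mul_atTop_of_neg (neg_neg_of_pos (half_pos hl)))).const_mul _
  refine squeeze_zero' ?_ ?_ hbound
  · filter_upwards [eventually_ge_atTop 0] with x hx
    exact mul_nonneg (exp_pos _).le (logb_nonneg one_lt_two (by nlinarith))
  · filter_upwards [eventually_ge_atTop 0] with x hx
    exact exp_neg_mul_mul_logb_le hl ha hx

lemma hasDerivAt_exp_neg_mul_mul_logb {x : ℝ} (hx : 0 < 1 + a * x) :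
    HasDerivAt (fun x => exp (-l * x) * logb 2 (1 + a * x))
      (-(l * exp (-l * x) * logb 2 (1 + a * x)) + a / log 2 * (exp (-l * x) * (1 + a * x)⁻¹))
      x := by
  have hexp : HasDerivAt (fun x => exp (-l * x)) (exp (-l * x) * -l) x := by
    simpa using ((hasDerivAt_id x).const_mul (-l)).exp
  have hlogb : HasDerivAt (fun x => logb 2 (1 + a * x)) (a / (1 + a * x) / log 2) x := by
    unfold logb
    simpa [div_eq_inv_mul] using
      ((((hasDerivAt_id x).const_mul a).const_add 1).log hx.ne').div_const _
  exact (hexp.mul hlogb).congr_deriv (by ring)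

lemma integrableOn_exp_neg_mul_mul_inv_one_add_mul (hl : 0 < l) (ha : 0 ≤ a) :
    IntegrableOn (fun x => exp (-l * x) * (1 + a * x)⁻¹) (Ioi 0) := by
  refine (exp_neg_integrableOn_Ioi 0 hl).mono' (by fun_prop) ?_
  filter_upwards [ae_restrict_mem measurableSet_Ioi] with x (hx : 0 < x)
  have h1 : 1 ≤ 1 + a * x := by nlinarith
  rw [norm_mul, Real.norm_of_nonneg (exp_pos _).le, norm_inv, Real.norm_of_nonneg (by linarith)]
  exact mul_le_of_le_one_right (exp_pos _).le (inv_le_one_of_one_le₀ h1)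

lemma integral_mul_exp_neg_mul_mul_logb (hl : 0 < l) (ha : 0 ≤ a) :
    ∫ x in Ioi 0, l * exp (-l * x) * logb 2 (1 + a * x)
      = a / log 2 * ∫ x in Ioi 0, exp (-l * x) * (1 + a * x)⁻¹ := by
  have hlogb := (integrableOn_exp_neg_mul_mul_logb hl ha).const_mul l
  have hinv := (integrableOn_exp_neg_mul_mul_inv_one_add_mul hl ha).const_mul (a / log 2)
  simp only [← mul_assoc] at hlogb
  have hftc := integral_Ioi_of_hasDerivAt_of_tendsto'
    (fun x (hx : 0 ≤ x) => hasDerivAt_exp_neg_mul_mul_logb (l := l) (by positivity))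
    (hlogb.fun_neg.add hinv) (tendsto_exp_neg_mul_mul_logb hl ha)
  rw [integral_add hlogb.fun_neg hinv, integral_neg, integral_const_mul] at hftc
  simp only [mul_zero, add_zero, exp_zero, logb_one, sub_zero] at hftc
  linarith

lemma C1_div_eq (ha : 0 < a) :
    C1 (a / l) = a / log 2 * ∫ x in Ioi 0, exp (-l * x) * (1 + a * x)⁻¹ := by
  let g : ℝ → ℝ := fun t => t⁻¹ * exp (-t / (a / l))
  have hshift : ∫ t in Ioi 1, g t = ∫ x in Ioi 0, g (x + 1) := by
    have := (measurePreserving_add_right volume (1 : ℝ)).setIntegral_preimage_emb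
      (measurableEmbedding_addRight 1) g (Ioi 1)
    rwa [preimage_add_const_Ioi, sub_self, eq_comm] at this
  have hscale : ∫ x in Ioi 0, g (x + 1) = a * ∫ x in Ioi 0, g (a * x + 1) := by
    simpa using (integral_comp_mul_left_Ioi' (fun x => g (x + 1)) 0 ha).symm
  have hg : ∀ x, g (a * x + 1) = exp (-(l / a)) * (exp (-l * x) * (1 + a * x)⁻¹) := by
    intro x
    simp only [g]
    rw [show -(a * x + 1) / (a / l) = -(l / a) + -l * x by field_simp; ring, exp_add,
      add_comm (a * x)]
    ring
  have hexp : exp (1 / (a / l)) * exp (-(l / a)) = 1 := by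
    rw [← exp_add, one_div_div, add_neg_cancel, exp_zero]
  unfold C1
  rw [hshift, hscale]
  simp only [hg, integral_const_mul]
  linear_combination (a / log 2 * ∫ x in Ioi 0, exp (-l * x) * (1 + a * x)⁻¹) * hexp

theorem integral_mul_exp_neg_mul_mul_logb_eq_C1 (hl : 0 < l) (ha : 0 < a) :
    ∫ x in Ioi 0, l * exp (-l * x) * logb 2 (1 + a * x) = C1 (a / l) := by
  rw [integral_mul_exp_neg_mul_mul_logb hl ha.le, C1_div_eq ha]

end

theorem stmt5 (L1 L2 σ2 γ2 : ℝ) (hL1 : 0 < L1) (hL2 : 0 < L2) (hσ : 0 < σ2)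
    (hγ2 : γ2 ∈ Set.Ioo (0:ℝ) 1) :
    (∫ x in Set.Ioi (0:ℝ),
      (1/2) * (Real.exp (-x/2) - Real.exp (-((L1 + L2) / (2 * L2)) * x)) *
        (Real.logb 2 (1 + L1 * x / (2 * σ2)) - Real.logb 2 (1 + γ2 * L1 * x / (2 * σ2))))
      = C1 (L1 / σ2) - C1 (γ2 * L1 / σ2)
        - (L2 / (L1 + L2)) *
          (C1 (L1 * L2 / ((L1 + L2) * σ2)) - C1 (γ2 * L1 * L2 / ((L1 + L2) * σ2))) := by
  obtain ⟨hγ0, -⟩ := hγ2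
  set μ := (L1 + L2) / (2 * L2)
  set a₁ := L1 / (2 * σ2)
  set a₂ := γ2 * L1 / (2 * σ2)
  have hμ : 0 < μ := by positivity
  have ha₁ : 0 < a₁ := by positivity
  have ha₂ : 0 < a₂ := by positivity
  let f : ℝ → ℝ → ℝ → ℝ := fun l a x => l * exp (-l * x) * logb 2 (1 + a * x)
  have hf : ∀ {l a}, 0 < l → 0 < a → IntegrableOn (f l a) (Ioi 0) := fun hl ha => by
    simp only [f, mul_assoc]
    exact (integrableOn_exp_neg_mul_mul_logb hl ha.le).const_mul _
  have hsplit : ∀ x, (1/2) * (exp (-x/2) - exp (-μ * x)) *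
      (logb 2 (1 + L1 * x / (2 * σ2)) - logb 2 (1 + γ2 * L1 * x / (2 * σ2)))
      = (f (1/2) a₁ x - f (1/2) a₂ x) - L2 / (L1 + L2) * (f μ a₁ x - f μ a₂ x) := by
    intro x
    simp only [f, μ, a₁, a₂]
    field_simp
  calc _ = ∫ x in Ioi 0, (f (1/2) a₁ x - f (1/2) a₂ x) - L2 / (L1 + L2) * (f μ a₁ x - f μ a₂ x) :=
        integral_congr_ae (Eventually.of_forall hsplit)
    _ = (C1 (a₁ / (1/2)) - C1 (a₂ / (1/2))) - L2 / (L1 + L2) * (C1 (a₁ / μ) - C1 (a₂ / μ)) := by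
        rw [integral_sub ((hf one_half_pos ha₁).fun_sub (hf one_half_pos ha₂))
            (((hf hμ ha₁).fun_sub (hf hμ ha₂)).const_mul _),
          integral_sub (hf one_half_pos ha₁) (hf one_half_pos ha₂), integral_const_mul,
          integral_sub (hf hμ ha₁) (hf hμ ha₂)]
        simp only [f, integral_mul_exp_neg_mul_mul_logb_eq_C1 one_half_pos ha₁,
          integral_mul_exp_neg_mul_mul_logb_eq_C1 one_half_pos ha₂,
          integral_mul_exp_neg_mul_mul_logb_eq_C1 hμ ha₁,
          integral_mul_exp_neg_mul_mul_logb_eq_C1 hμ ha₂]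
    _ = _ := by
        simp only [μ, a₁, a₂]
        congr 3 <;> field_simp
end

section
/- Let L₂, σ² > 0 and γ₁, γ₂ ∈ (0,1) with γ₁ + γ₂ = 1. Then ∫_0^∞ (1/2) e^{-x/2} log₂(1 + γ₁L₂x/(γ₂L₂x + 2σ²)) dx = C₁(L₂/σ²) − C₁(γ₂L₂/σ²). (This is the closed-form ergodic rate of the strong user's message in uni-directional cooperative NOMA.) -/
/-!
Since γ₁ + γ₂ = 1, the argument of the logarithm factors as
1 + γ₁s/(γ₂s + 1) = (1 + s)/(1 + γ₂s) with s = L₂x/(2σ²), so the rate is a difference of two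
integrals ∫₀^∞ r e^{-rx} log(1 + ax) dx. Integrating by parts (the boundary term vanishes because
log(1 + ax) ≤ ax) turns such an integral into ∫₀^∞ e^{-rx} a/(1 + ax) dx, and the substitution
t = 1 + ax makes this e^{r/a} ∫₁^∞ t⁻¹ e^{-rt/a} dt = ln 2 · C₁(a/r).
-/

open Real MeasureTheory Set

open Filter Topology

theorem integral_comp_mul_add_Ioi {E : Type*} [NormedAddCommGroup E] [NormedSpace ℝ E]
    (g : ℝ → E) {b : ℝ} (hb : 0 < b) (c : ℝ) :
    ∫ x in Ioi 0, g (b * x + c) = b⁻¹ • ∫ t in Ioi c, g t := by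
  have hshift : ∫ x in Ioi 0, g (x + c) = ∫ t in Ioi c, g t := by
    simpa [preimage_add_const_Ioi] using (measurePreserving_add_right volume c)
      |>.setIntegral_preimage_emb (measurableEmbedding_addRight c) g (Ioi c)
  simpa [hshift] using integral_comp_mul_left_Ioi (fun y => g (y + c)) 0 hb

section ExponentialWeight

variable {r a : ℝ}

lemma log_one_add_mul_nonneg (ha : 0 ≤ a) {x : ℝ} (hx : 0 ≤ x) : 0 ≤ log (1 + a * x) :=
  log_nonneg (le_add_of_nonneg_right (mul_nonneg ha hx))

lemma log_one_add_mul_le (ha : 0 ≤ a) {x : ℝ} (hx : 0 ≤ x) : log (1 + a * x) ≤ a * x := by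
  linarith [log_le_sub_one_of_pos (by positivity : 0 < 1 + a * x)]

lemma exp_neg_mul_mul_log_one_add_mul_le (ha : 0 ≤ a) {x : ℝ} (hx : 0 ≤ x) :
    exp (-r * x) * log (1 + a * x) ≤ a * (x * exp (-r * x)) := by
  nlinarith [mul_le_mul_of_nonneg_left (log_one_add_mul_le ha hx) (exp_pos (-r * x)).le]

lemma integrableOn_exp_neg_mul_mul_log_one_add_mul (hr : 0 < r) (ha : 0 ≤ a) :
    IntegrableOn (fun x => exp (-r * x) * log (1 + a * x)) (Ioi 0) := by
  have hdom : IntegrableOn (fun x : ℝ => a * (x ^ (1 : ℝ) * exp (-r * x ^ (1 : ℝ)))) (Ioi 0) :=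
    (integrableOn_rpow_mul_exp_neg_mul_rpow (by norm_num) one_pos hr).const_mul a
  refine hdom.mono' ?_ ?_
  · refine ContinuousOn.aestronglyMeasurable ?_ measurableSet_Ioi
    refine (continuous_exp.comp_continuousOn (by fun_prop)).mul (ContinuousOn.log (by fun_prop) ?_)
    intro x (hx : 0 < x)
    positivity
  · filter_upwards [ae_restrict_mem measurableSet_Ioi] with x (hx : 0 < x)
    rw [rpow_one, norm_of_nonneg (mul_nonneg (exp_pos _).le (log_one_add_mul_nonneg ha hx.le))]
    exact exp_neg_mul_mul_log_one_add_mul_le ha hx.le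

lemma integrableOn_exp_neg_mul_mul_div_one_add_mul (hr : 0 < r) (ha : 0 ≤ a) :
    IntegrableOn (fun x => exp (-r * x) * (a / (1 + a * x))) (Ioi 0) := by
  refine ((exp_neg_integrableOn_Ioi 0 hr).const_mul a).mono' ?_ ?_
  · refine ContinuousOn.aestronglyMeasurable ?_ measurableSet_Ioi
    refine (continuous_exp.comp_continuousOn (by fun_prop)).mul
      (continuousOn_const.div (by fun_prop) ?_)
    intro x (hx : 0 < x)
    positivity
  · filter_upwards [ae_restrict_mem measurableSet_Ioi] with x (hx : 0 < x)
    have hdiv : a / (1 + a * x) ≤ a := div_le_self ha (by nlinarith)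
    rw [norm_of_nonneg (by positivity)]
    nlinarith [mul_le_mul_of_nonneg_left hdiv (exp_pos (-r * x)).le]

lemma tendsto_exp_neg_mul_mul_log_one_add_mul (hr : 0 < r) (ha : 0 ≤ a) :
    Tendsto (fun x => exp (-r * x) * log (1 + a * x)) atTop (𝓝 0) := by
  have hdom : Tendsto (fun x : ℝ => a * (x ^ (1 : ℝ) * exp (-r * x))) atTop (𝓝 0) := by
    simpa using (tendsto_rpow_mul_exp_neg_mul_atTop_nhds_zero 1 r hr).const_mul a
  refine squeeze_zero' ?_ ?_ hdom
  · filter_upwards [eventually_ge_atTop 0] with x hx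
    exact mul_nonneg (exp_pos _).le (log_one_add_mul_nonneg ha hx)
  · filter_upwards [eventually_ge_atTop 0] with x hx
    simpa using exp_neg_mul_mul_log_one_add_mul_le ha hx

lemma hasDerivAt_exp_neg_mul_mul_log_one_add_mul {x : ℝ} (hx : 0 < 1 + a * x) :
    HasDerivAt (fun x => exp (-r * x) * log (1 + a * x))
      (exp (-r * x) * (a / (1 + a * x)) - r * (exp (-r * x) * log (1 + a * x))) x := by
  have hexp : HasDerivAt (fun x => exp (-r * x)) (exp (-r * x) * -r) x := by
    simpa using ((hasDerivAt_id x).const_mul (-r)).exp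
  have hlog : HasDerivAt (fun x => log (1 + a * x)) (a / (1 + a * x)) x := by
    simpa using (((hasDerivAt_id x).const_mul a).const_add 1).log hx.ne'
  exact (hexp.mul hlog).congr_deriv (by ring)

lemma integral_mul_exp_neg_mul_mul_log_eq_integral_exp_neg_mul_mul_div (hr : 0 < r) (ha : 0 ≤ a) :
    ∫ x in Ioi 0, r * (exp (-r * x) * log (1 + a * x))
      = ∫ x in Ioi 0, exp (-r * x) * (a / (1 + a * x)) := by
  have hlog := (integrableOn_exp_neg_mul_mul_log_one_add_mul hr ha).const_mul r
  have hdiv := integrableOn_exp_neg_mul_mul_div_one_add_mul hr ha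
  have hparts := integral_Ioi_of_hasDerivAt_of_tendsto'
    (fun x (hx : 0 ≤ x) => hasDerivAt_exp_neg_mul_mul_log_one_add_mul (r := r) (by positivity))
    (hdiv.sub hlog) (tendsto_exp_neg_mul_mul_log_one_add_mul hr ha)
  rw [integral_sub hdiv hlog] at hparts
  simp only [mul_zero, add_zero, log_one, zero_sub] at hparts
  linarith

lemma integral_exp_neg_mul_mul_div_one_add_mul {c : ℝ} (hr : 0 < r) (hc : 0 < c) :
    ∫ x in Ioi 0, exp (-r * x) * (r * c / (1 + r * c * x))
      = exp (1 / c) * ∫ t in Ioi 1, t⁻¹ * exp (-t / c) := by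
  have hrc : 0 < r * c := mul_pos hr hc
  have hsubst : ∀ x, exp (-r * x) * (r * c / (1 + r * c * x))
      = (r * c) * (exp (1 / c) * ((r * c * x + 1)⁻¹ * exp (-(r * c * x + 1) / c))) := by
    intro x
    have hexp : exp (-r * x) = exp (1 / c) * exp (-(r * c * x + 1) / c) := by
      rw [← exp_add]
      congr 1
      field_simp
      ring
    rw [hexp]
    field_simp
    ring
  have hcomp := integral_comp_mul_add_Ioi (fun t => exp (1 / c) * (t⁻¹ * exp (-t / c))) hrc 1
  simp_rw [hsubst]
  rw [integral_const_mul, hcomp, integral_const_mul, smul_eq_mul, ← mul_assoc,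
    mul_inv_cancel₀ hrc.ne', one_mul]

theorem integral_mul_exp_neg_mul_mul_log_one_add_mul {c : ℝ} (hr : 0 < r) (hc : 0 < c) :
    ∫ x in Ioi 0, r * (exp (-r * x) * log (1 + r * c * x))
      = exp (1 / c) * ∫ t in Ioi 1, t⁻¹ * exp (-t / c) := by
  rw [integral_mul_exp_neg_mul_mul_log_eq_integral_exp_neg_mul_mul_div hr (by positivity),
    integral_exp_neg_mul_mul_div_one_add_mul hr hc]

end ExponentialWeight

lemma logb_one_add_div_eq_log_sub_log {L σ γ1 γ2 x : ℝ} (hL : 0 < L) (hσ : 0 < σ) (hγ2 : 0 ≤ γ2)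
    (hsum : γ1 + γ2 = 1) (hx : 0 ≤ x) :
    logb 2 (1 + γ1 * L * x / (γ2 * L * x + 2 * σ))
      = (log 2)⁻¹ * (log (1 + 1 / 2 * (L / σ) * x) - log (1 + 1 / 2 * (γ2 * L / σ) * x)) := by
  have hquot : 1 + γ1 * L * x / (γ2 * L * x + 2 * σ)
      = (1 + 1 / 2 * (L / σ) * x) / (1 + 1 / 2 * (γ2 * L / σ) * x) := by
    obtain rfl : γ1 = 1 - γ2 := by linarith
    have hden : 0 < γ2 * L * x + 2 * σ := by positivity
    field_simp
    ring
  rw [hquot, logb, log_div (by positivity) (by positivity), div_eq_inv_mul]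

theorem stmt6_general (L2 σ2 γ1 γ2 : ℝ) (hL2 : 0 < L2) (hσ : 0 < σ2)
    (hγ2 : γ2 ∈ Set.Ioo (0:ℝ) 1) (hsum : γ1 + γ2 = 1) :
    (∫ x in Set.Ioi (0:ℝ),
      (1/2) * Real.exp (-x/2) * Real.logb 2 (1 + γ1 * L2 * x / (γ2 * L2 * x + 2 * σ2)))
      = C1 (L2 / σ2) - C1 (γ2 * L2 / σ2) := by
  obtain ⟨hγ2, -⟩ := hγ2
  have hc₁ : 0 < L2 / σ2 := by positivity
  have hc₂ : 0 < γ2 * L2 / σ2 := by positivity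
  have hintegrable (c : ℝ) (hc : 0 < c) :=
    (integrableOn_exp_neg_mul_mul_log_one_add_mul (r := 1 / 2) (a := 1 / 2 * c) one_half_pos
      (by positivity)).const_mul (1 / 2)
  have hintegrand : ∀ x ∈ Ioi (0 : ℝ),
      (1/2) * exp (-x/2) * logb 2 (1 + γ1 * L2 * x / (γ2 * L2 * x + 2 * σ2))
        = (log 2)⁻¹ * (1 / 2 * (exp (-(1 / 2) * x) * log (1 + 1 / 2 * (L2 / σ2) * x))
          - 1 / 2 * (exp (-(1 / 2) * x) * log (1 + 1 / 2 * (γ2 * L2 / σ2) * x))) := by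
    intro x (hx : 0 < x)
    rw [logb_one_add_div_eq_log_sub_log hL2 hσ hγ2.le hsum hx.le,
      show -x / 2 = -(1 / 2) * x by ring]
    ring
  rw [setIntegral_congr_fun measurableSet_Ioi hintegrand, integral_const_mul,
    integral_sub (hintegrable _ hc₁) (hintegrable _ hc₂),
    integral_mul_exp_neg_mul_mul_log_one_add_mul one_half_pos hc₁,
    integral_mul_exp_neg_mul_mul_log_one_add_mul one_half_pos hc₂, C1, C1]
  ring

theorem stmt6 (L2 σ2 γ1 γ2 : ℝ) (hL2 : 0 < L2) (hσ : 0 < σ2)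
    (hγ1 : γ1 ∈ Set.Ioo (0:ℝ) 1) (hγ2 : γ2 ∈ Set.Ioo (0:ℝ) 1) (hsum : γ1 + γ2 = 1) :
    (∫ x in Set.Ioi (0:ℝ),
      (1/2) * Real.exp (-x/2) * Real.logb 2 (1 + γ1 * L2 * x / (γ2 * L2 * x + 2 * σ2)))
      = C1 (L2 / σ2) - C1 (γ2 * L2 / σ2) :=
  stmt6_general L2 σ2 γ1 γ2 hL2 hσ hγ2 hsum
end

section
/- The function C₁ is strictly concave on (1,∞): for all real x, y with x, y > 1, x ≠ y, and all t ∈ (0,1), one has C₁(t·x + (1−t)·y) > t·C₁(x) + (1−t)·C₁(y). -/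
/-!
Substituting `t = 1 + x r` gives `C₁(x) = (1 / ln 2) ∫_0^∞ e^{-r} · x / (1 + x r) dr` for `x > 0`.
For each `r > 0` the integrand is strictly concave in `x > 0`, and integrating a strict pointwise
inequality against a nonzero measure keeps it strict, so `C₁` is strictly concave on all of
`(0, ∞)`.
-/

open Real MeasureTheory Set

theorem StrictConcaveOn.const_mul {E : Type*} [AddCommGroup E] [Module ℝ E] {s : Set E}
    {f : E → ℝ} {c : ℝ} (hc : 0 < c) (hf : StrictConcaveOn ℝ s f) :
    StrictConcaveOn ℝ s fun x => c * f x := by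
  refine ⟨hf.1, fun x hx y hy hxy a b ha hb hab => ?_⟩
  have := mul_lt_mul_of_pos_left (hf.2 hx hy hxy ha hb hab) hc
  simp only [smul_eq_mul] at this ⊢
  linarith

theorem MeasureTheory.integral_lt_integral_of_ae_lt {α : Type*} [MeasurableSpace α]
    {μ : Measure α} (hμ : μ ≠ 0) {f g : α → ℝ} (hf : Integrable f μ) (hg : Integrable g μ)
    (hfg : ∀ᵐ a ∂μ, f a < g a) : ∫ a, f a ∂μ < ∫ a, g a ∂μ := by
  have hle := ae_le_of_ae_lt hfg
  refine (integral_mono_ae hf hg hle).lt_of_ne fun heq => ?_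
  have := ae_neBot.2 hμ
  obtain ⟨a, hlt, heq⟩ := (hfg.and ((integral_eq_iff_of_ae_le hf hg hle).1 heq)).exists
  exact hlt.ne heq

theorem strictConcaveOn_integral {α E : Type*} [MeasurableSpace α] [AddCommGroup E]
    [Module ℝ E] {μ : Measure α} (hμ : μ ≠ 0) {s : Set E} (hs : Convex ℝ s)
    {f : E → α → ℝ} (hint : ∀ x ∈ s, Integrable (f x) μ)
    (hf : ∀ᵐ a ∂μ, StrictConcaveOn ℝ s (f · a)) :
    StrictConcaveOn ℝ s fun x => ∫ a, f x a ∂μ := by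
  refine ⟨hs, fun x hx y hy hxy a b ha hb hab => ?_⟩
  calc a • ∫ r, f x r ∂μ + b • ∫ r, f y r ∂μ = ∫ r, (a • f x r + b • f y r) ∂μ := by
        rw [← integral_smul, ← integral_smul]
        exact (integral_add ((hint x hx).smul a) ((hint y hy).smul b)).symm
    _ < ∫ r, f (a • x + b • y) r ∂μ :=
        integral_lt_integral_of_ae_lt hμ (((hint x hx).smul a).add ((hint y hy).smul b))
          (hint _ (hs hx hy ha.le hb.le hab)) (hf.mono fun r hr => hr.2 hx hy hxy ha hb hab)

theorem strictConcaveOn_div_one_add_mul {r : ℝ} (hr : 0 < r) :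
    StrictConcaveOn ℝ (Ioi 0) fun x => x / (1 + x * r) := by
  refine ⟨convex_Ioi 0, fun x (hx : 0 < x) y (hy : 0 < y) hxy a b ha hb hab => ?_⟩
  obtain rfl : b = 1 - a := eq_sub_of_add_eq' hab
  have gap : (a * x + (1 - a) * y) / (1 + (a * x + (1 - a) * y) * r)
      - (a * (x / (1 + x * r)) + (1 - a) * (y / (1 + y * r))) = a * (1 - a) * r * (x - y) ^ 2 /
        ((1 + x * r) * (1 + y * r) * (1 + (a * x + (1 - a) * y) * r)) := by
    field_simp
    ring
  have gap_pos : 0 < a * (1 - a) * r * (x - y) ^ 2 /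
      ((1 + x * r) * (1 + y * r) * (1 + (a * x + (1 - a) * y) * r)) := by
    have := sub_ne_zero.2 hxy
    positivity
  simp only [smul_eq_mul]
  linarith

theorem integral_Ioi_eq_smul_integral_comp_add_mul {E : Type*} [NormedAddCommGroup E]
    [NormedSpace ℝ E] (g : ℝ → E) (c : ℝ) {b : ℝ} (hb : 0 < b) :
    ∫ t in Ioi c, g t = b • ∫ r in Ioi 0, g (c + b * r) := by
  rw [integral_comp_mul_left_Ioi' (fun s => g (c + s)) 0 hb, mul_zero,
    ← (measurePreserving_add_left volume c).setIntegral_preimage_emb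
      (measurableEmbedding_addLeft c) g (Ioi c)]
  simp

theorem integrableOn_exp_neg_mul_div_one_add_mul {x : ℝ} (hx : 0 < x) :
    IntegrableOn (fun r => exp (-r) * (x / (1 + x * r))) (Ioi 0) := by
  have hexp := exp_neg_integrableOn_Ioi 0 one_pos
  simp only [neg_mul, one_mul] at hexp
  refine hexp.mul_bdd (c := x) (by fun_prop : Measurable _).aestronglyMeasurable ?_
  filter_upwards [ae_restrict_mem measurableSet_Ioi] with r (hr : 0 < r)
  rw [norm_of_nonneg (by positivity), div_le_iff₀ (by positivity)]
  nlinarith [mul_pos hx (mul_pos hx hr)]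

theorem C1_eq_integral {x : ℝ} (hx : 0 < x) :
    C1 x = 1 / Real.log 2 * ∫ r in Ioi 0, exp (-r) * (x / (1 + x * r)) := by
  rw [C1, mul_assoc, integral_Ioi_eq_smul_integral_comp_add_mul _ 1 hx, smul_eq_mul,
    ← integral_const_mul, ← integral_const_mul]
  congr 1
  refine setIntegral_congr_fun measurableSet_Ioi fun r (hr : 0 < r) => ?_
  have hexp : exp (1 / x) * exp (-(1 + x * r) / x) = exp (-r) := by
    rw [← exp_add]; congr 1; field_simp; ring
  rw [← hexp]
  ring

theorem strictConcaveOn_C1 : StrictConcaveOn ℝ (Ioi 0) C1 := by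
  have hμ : volume.restrict (Ioi (0 : ℝ)) ≠ 0 := by simp
  refine ((strictConcaveOn_integral hμ (convex_Ioi 0)
    (fun x (hx : 0 < x) => integrableOn_exp_neg_mul_div_one_add_mul hx) ?_).const_mul
    (by positivity : 0 < 1 / Real.log 2)).congr fun x (hx : 0 < x) => (C1_eq_integral hx).symm
  filter_upwards [ae_restrict_mem measurableSet_Ioi] with r (hr : 0 < r)
  exact (strictConcaveOn_div_one_add_mul hr).const_mul (exp_pos (-r))

theorem stmt12 : ∀ x y t : ℝ, 1 < x → 1 < y → x ≠ y → 0 < t → t < 1 →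
    t * C1 x + (1 - t) * C1 y < C1 (t * x + (1 - t) * y) :=
  fun _ _ t hx hy hxy ht ht1 => strictConcaveOn_C1.2 (zero_lt_one.trans hx)
    (zero_lt_one.trans hy) hxy ht (sub_pos.2 ht1) (add_sub_cancel t 1)
end

section
/- The function C₁ is twice differentiable on (0,∞), and for every x > 0 its second derivative satisfies C₁''(x) = (2/x³ + 1/x⁴)·C₁(x) − (1/ln 2)·(1/x³ + 1/x²). -/
/-!
The substitution `u = t / x` turns `C₁(x)` into `(1/ln 2) e^{1/x} E₁(1/x)`, where
`E₁(y) = ∫_y^∞ u⁻¹ e^{-u} du` is the exponential integral, with `E₁'(y) = -e^{-y}/y`. The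
exponentials then cancel in the derivative, leaving the first-order equation
`C₁' = 1/(x ln 2) - C₁/x²`; differentiating it once more gives `C₁''`.
-/

open Real MeasureTheory Set

open Filter Topology

theorem hasDerivAt_integral_Ioi {E : Type*} [NormedAddCommGroup E] [NormedSpace ℝ E]
    [CompleteSpace E] {f : ℝ → E} {a y : ℝ} (hf : IntegrableOn f (Ioi a)) (hay : a < y)
    (hcont : ContinuousAt f y) :
    HasDerivAt (fun b => ∫ x in Ioi b, f x) (-f y) y := by
  have hsplit : (fun b => ∫ x in Ioi b, f x) =ᶠ[𝓝 y]
      fun b => (∫ x in Ioi a, f x) - ∫ x in a..b, f x := by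
    filter_upwards [Ioi_mem_nhds hay] with b hab
    rw [← intervalIntegral.integral_Ioi_sub_Ioi hf (le_of_lt hab), sub_sub_cancel]
  have hint : IntervalIntegrable f volume a y :=
    (intervalIntegrable_iff_integrableOn_Ioc_of_le hay.le).2 (hf.mono_set Ioc_subset_Ioi_self)
  have hmeas : StronglyMeasurableAtFilter f (𝓝 y) :=
    _root_.AEStronglyMeasurable.stronglyMeasurableAtFilter_of_mem hf.aestronglyMeasurable
      (Ioi_mem_nhds hay)
  simpa using ((intervalIntegral.integral_hasDerivAt_right hint hmeas hcont).const_sub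
    (∫ x in Ioi a, f x)).congr_of_eventuallyEq hsplit

theorem setIntegral_Ioi_inv_smul_comp_div {E : Type*} [NormedAddCommGroup E] [NormedSpace ℝ E]
    (g : ℝ → E) (a : ℝ) {c : ℝ} (hc : 0 < c) :
    ∫ t in Ioi a, t⁻¹ • g (t / c) = ∫ u in Ioi (a / c), u⁻¹ • g u := by
  have h := integral_comp_mul_left_Ioi (fun u => u⁻¹ • g u) a (inv_pos.2 hc)
  have hscale (t : ℝ) : (c⁻¹ * t)⁻¹ • g (c⁻¹ * t) = c • t⁻¹ • g (t / c) := by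
    rw [smul_smul, mul_inv, inv_inv, div_eq_inv_mul]
  simp only [hscale, integral_smul] at h
  rw [inv_inv, ← div_eq_inv_mul] at h
  exact smul_right_injective E hc.ne' h

noncomputable def expIntegralE1 (y : ℝ) : ℝ := ∫ u in Ioi y, u⁻¹ * exp (-u)

theorem integrableOn_inv_mul_exp_neg_Ioi {a : ℝ} (ha : 0 < a) :
    IntegrableOn (fun u => u⁻¹ * exp (-u)) (Ioi a) := by
  refine ((exp_neg_integrableOn_Ioi a one_pos).const_mul a⁻¹).mono' ?_ ?_
  · exact (measurable_inv.mul (measurable_exp.comp measurable_neg)).aestronglyMeasurable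
  · filter_upwards [ae_restrict_mem measurableSet_Ioi] with u hu
    have hu0 : 0 < u := ha.trans hu
    rw [norm_of_nonneg (by positivity), neg_one_mul]
    exact mul_le_mul_of_nonneg_right (inv_anti₀ ha (le_of_lt hu)) (exp_pos _).le

theorem hasDerivAt_expIntegralE1 {y : ℝ} (hy : 0 < y) :
    HasDerivAt expIntegralE1 (-(y⁻¹ * exp (-y))) y :=
  hasDerivAt_integral_Ioi (integrableOn_inv_mul_exp_neg_Ioi (half_pos hy)) (half_lt_self hy)
    ((continuousAt_inv₀ hy.ne').mul (by fun_prop))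

theorem C1_eq_expIntegralE1 {x : ℝ} (hx : 0 < x) :
    C1 x = (1 / Real.log 2) * exp x⁻¹ * expIntegralE1 x⁻¹ := by
  have h := setIntegral_Ioi_inv_smul_comp_div (fun u => exp (-u)) 1 hx
  simp only [smul_eq_mul, one_div] at h
  rw [C1, expIntegralE1, one_div x, ← h]
  simp only [neg_div]

theorem hasDerivAt_C1 {x : ℝ} (hx : 0 < x) :
    HasDerivAt C1 (1 / Real.log 2 / x - C1 x / x ^ 2) x := by
  have hinv := hasDerivAt_inv hx.ne'
  have h := (((hasDerivAt_exp _).comp x hinv).mul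
    ((hasDerivAt_expIntegralE1 (inv_pos.2 hx)).comp x hinv)).const_mul (1 / Real.log 2)
  have hC1 : C1 =ᶠ[𝓝 x] fun y => (1 / Real.log 2) * (exp y⁻¹ * expIntegralE1 y⁻¹) := by
    filter_upwards [Ioi_mem_nhds hx] with y hy
    rw [C1_eq_expIntegralE1 hy, mul_assoc]
  refine (h.congr_of_eventuallyEq hC1).congr_deriv ?_
  simp only [Function.comp_apply, inv_inv]
  rw [C1_eq_expIntegralE1 hx, exp_neg]
  field_simp
  ring

theorem hasDerivAt_deriv_C1 {x : ℝ} (hx : 0 < x) :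
    HasDerivAt (deriv C1)
      ((2 / x ^ 3 + 1 / x ^ 4) * C1 x - (1 / Real.log 2) * (1 / x ^ 3 + 1 / x ^ 2)) x := by
  have hderiv : deriv C1 =ᶠ[𝓝 x] fun y => 1 / Real.log 2 / y - C1 y / y ^ 2 := by
    filter_upwards [Ioi_mem_nhds hx] with y hy using (hasDerivAt_C1 hy).deriv
  have h := ((hasDerivAt_const x (1 / Real.log 2)).fun_div (hasDerivAt_id' x) hx.ne').sub
    ((hasDerivAt_C1 hx).fun_div (hasDerivAt_pow 2 x) (by positivity))
  refine (h.congr_of_eventuallyEq hderiv).congr_deriv ?_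
  field_simp
  ring

theorem stmt13 : ∀ x : ℝ, 0 < x →
    DifferentiableAt ℝ C1 x ∧ DifferentiableAt ℝ (deriv C1) x ∧
    deriv (deriv C1) x
      = (2 / x^3 + 1 / x^4) * C1 x - (1 / Real.log 2) * (1 / x^3 + 1 / x^2) := fun _ hx =>
  ⟨(hasDerivAt_C1 hx).differentiableAt, (hasDerivAt_deriv_C1 hx).differentiableAt,
    (hasDerivAt_deriv_C1 hx).deriv⟩
end

section
/- Let L₁, L₂, σ² > 0. The closed-form ergodic sum capacity of bi-directional cooperative NOMA, S(γ₂) = C₁(L₁/σ²) − C₁(γ₂L₁/σ²) + C₁(L₂/σ²) − C₁(L₁L₂/((L₁+L₂)σ²)) + C₁(γ₂L₁L₂/((L₁+L₂)σ²)), is a decreasing function of γ₂ on (0,1): for all 0 < γ ≤ γ' < 1, S(γ') ≤ S(γ). Equivalently, γ ↦ C₁(γL₁/σ²) − C₁(γL₁L₂/((L₁+L₂)σ²)) is increasing on (0,1). -/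
open Real MeasureTheory Set

/-!
The substitution `t = 1 + γ u` gives `C₁(γ x) = (ln 2)⁻¹ ∫₀^∞ e^{-u/x} / (u + γ⁻¹) du`.
For `c ≤ a` the difference `C₁(γ a) - C₁(γ c)` is therefore the integral of the nonnegative
numerator `e^{-u/a} - e^{-u/c}` against `1 / (u + γ⁻¹)`, which increases with `γ`.
-/

lemma image_const_add_mul_Ioi_zero {γ : ℝ} (hγ : 0 < γ) (b : ℝ) :
    (fun u => b + γ * u) '' Ioi 0 = Ioi b := by
  rw [show (fun u => b + γ * u) = (b + ·) ∘ (γ * ·) from rfl, image_comp,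
    image_mul_left_Ioi hγ, mul_zero, image_const_add_Ioi, add_zero]

lemma C1_mul_eq_integral {γ : ℝ} (hγ : 0 < γ) (x : ℝ) :
    C1 (γ * x) = (Real.log 2)⁻¹ * ∫ u in Ioi 0, exp (-u / x) / (u + γ⁻¹) := by
  have hderiv : ∀ u ∈ Ioi (0 : ℝ), HasDerivWithinAt (fun u => 1 + γ * u) γ (Ioi 0) u :=
    fun u _ => by simpa using ((hasDerivAt_id u).const_mul γ).const_add 1 |>.hasDerivWithinAt
  have hinj : InjOn (fun u : ℝ => 1 + γ * u) (Ioi 0) :=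
    fun u _ v _ h => mul_left_cancel₀ hγ.ne' (add_left_cancel h)
  rw [C1, ← image_const_add_mul_Ioi_zero hγ,
    integral_image_eq_integral_abs_deriv_smul measurableSet_Ioi hderiv hinj, mul_assoc,
    one_div, ← integral_const_mul]
  congr 1
  refine setIntegral_congr_fun measurableSet_Ioi fun u (hu : 0 < u) => ?_
  have hexp : 1 / (γ * x) + -(1 + γ * u) / (γ * x) = -u / x := by
    rw [← add_div, show 1 + -(1 + γ * u) = γ * -u by ring, mul_div_mul_left _ _ hγ.ne']
  rw [abs_of_pos hγ, smul_eq_mul, ← hexp, exp_add]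
  field_simp
  ring

lemma integrableOn_exp_neg_div_div_add {x c : ℝ} (hx : 0 < x) (hc : 0 < c) :
    IntegrableOn (fun u => exp (-u / x) / (u + c)) (Ioi 0) := by
  have hdom : IntegrableOn (fun u => c⁻¹ * exp (-x⁻¹ * u)) (Ioi 0) :=
    (exp_neg_integrableOn_Ioi 0 (inv_pos.mpr hx)).const_mul c⁻¹
  refine hdom.mono' (by fun_prop : Measurable _).aestronglyMeasurable ?_
  filter_upwards [ae_restrict_mem measurableSet_Ioi] with u (hu : 0 < u)
  rw [norm_of_nonneg (by positivity), neg_mul, inv_mul_eq_div x u, ← neg_div, div_eq_inv_mul]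
  gcongr
  linarith

lemma exp_neg_div_le_exp_neg_div {u a c : ℝ} (hu : 0 ≤ u) (hc : 0 < c) (hca : c ≤ a) :
    exp (-u / c) ≤ exp (-u / a) := by
  simp only [neg_div]
  gcongr

theorem monotoneOn_C1_mul_sub_C1_mul {a c : ℝ} (hc : 0 < c) (hca : c ≤ a) :
    MonotoneOn (fun γ => C1 (γ * a) - C1 (γ * c)) (Ioi 0) := by
  intro γ (hγ : 0 < γ) γ' (hγ' : 0 < γ') hle
  have ha : 0 < a := hc.trans_le hca
  have hint {x : ℝ} (hx : 0 < x) {δ : ℝ} (hδ : 0 < δ) :=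
    integrableOn_exp_neg_div_div_add hx (inv_pos.mpr hδ)
  simp only [C1_mul_eq_integral hγ, C1_mul_eq_integral hγ', ← mul_sub,
    ← integral_sub (hint ha hγ) (hint hc hγ), ← integral_sub (hint ha hγ') (hint hc hγ')]
  refine mul_le_mul_of_nonneg_left ?_ (by positivity)
  refine setIntegral_mono_on ((hint ha hγ).sub (hint hc hγ)) ((hint ha hγ').sub (hint hc hγ'))
    measurableSet_Ioi fun u (hu : 0 < u) => ?_
  simp only [← sub_div]
  have := exp_neg_div_le_exp_neg_div hu.le hc hca
  gcongr

theorem stmt15 (L1 L2 σ2 : ℝ) (hL1 : 0 < L1) (hL2 : 0 < L2) (hσ : 0 < σ2) :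
    ∀ γ γ' : ℝ, 0 < γ → γ ≤ γ' → γ' < 1 →
      C1 (L1 / σ2) - C1 (γ' * L1 / σ2) + C1 (L2 / σ2)
          - C1 (L1 * L2 / ((L1 + L2) * σ2)) + C1 (γ' * L1 * L2 / ((L1 + L2) * σ2))
        ≤ C1 (L1 / σ2) - C1 (γ * L1 / σ2) + C1 (L2 / σ2)
          - C1 (L1 * L2 / ((L1 + L2) * σ2)) + C1 (γ * L1 * L2 / ((L1 + L2) * σ2)) := by
  intro γ γ' hγ hle _
  have hc : 0 < L1 * L2 / ((L1 + L2) * σ2) := by positivity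
  have hca : L1 * L2 / ((L1 + L2) * σ2) ≤ L1 / σ2 := by
    rw [div_le_div_iff₀ (by positivity) hσ]
    nlinarith [mul_pos (mul_pos hL1 hL1) hσ]
  have key := monotoneOn_C1_mul_sub_C1_mul hc hca hγ (hγ.trans_le hle) hle
  simp only [mul_div_assoc, mul_assoc] at key ⊢
  linarith
end
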